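/- arXiv:1511.07471 — 5 statements merged into one kernel-verified Lean document; each statement's English description precedes it below -/
import Mathlib

section
/- Under Assumption 1, the matrix C = −Φᵀ M̄ (I − P^λ_{π,γ}) Φ is negative definite (i.e., there exists c > 0 with θᵀCθ ≤ −c|θ|² for all θ ∈ ℝⁿ) if and only if Assumption 2 holds. -/
/-!
Statement 0: Under Assumption 1 (on target and behavior policies), the ETD(λ) matrix
`C = −Φᵀ M̄ (I − P^λ_{π,γ}) Φ` is negative definite (∃ c > 0 with θᵀCθ ≤ −c|θ|² for all θ)
if and only if Assumption 2 holds (the feature vectors of emphasized states contain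
n linearly independent vectors).
-/

open Matrix
open scoped Classical

noncomputable section
namespace ETD0

/-- Transition matrix on states induced by a policy `pol` in the MDP with transitions `p`. -/
def Pmat {N M : ℕ} (p : Fin N → Fin M → Fin N → ℝ) (pol : Fin N → Fin M → ℝ) :
    Matrix (Fin N) (Fin N) ℝ :=
  Matrix.of fun s s' => ∑ a, pol s a * p s a s'

/-- The substochastic matrix `P^λ_{π,γ} = I − (I − P_π Γ Λ)⁻¹ (I − P_π Γ)`. -/
def Plam {N M : ℕ} (p : Fin N → Fin M → Fin N → ℝ) (pol : Fin N → Fin M → ℝ)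
    (γf lf : Fin N → ℝ) : Matrix (Fin N) (Fin N) ℝ :=
  1 - (1 - Pmat p pol * Matrix.diagonal γf * Matrix.diagonal lf)⁻¹ *
      (1 - Pmat p pol * Matrix.diagonal γf)

/-- Diagonal entries of `M̄`: `diag(M̄) = d_{π°,i}ᵀ (I − P^λ_{π,γ})⁻¹`, where
`d_{π°,i}(s) = d_{π°}(s)·i(s)`. -/
def MbarDiag {N M : ℕ} (p : Fin N → Fin M → Fin N → ℝ) (pol : Fin N → Fin M → ℝ)
    (γf lf d iF : Fin N → ℝ) : Fin N → ℝ :=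
  Matrix.vecMul (fun s => d s * iF s) (1 - Plam p pol γf lf)⁻¹

/-- The ETD(λ) matrix `C = −Φᵀ M̄ (I − P^λ_{π,γ}) Φ`. -/
def Cmat {N M n : ℕ} (p : Fin N → Fin M → Fin N → ℝ) (pol : Fin N → Fin M → ℝ)
    (γf lf d iF : Fin N → ℝ) (Φ : Matrix (Fin N) (Fin n) ℝ) : Matrix (Fin n) (Fin n) ℝ :=
  -(Φᵀ * Matrix.diagonal (MbarDiag p pol γf lf d iF) * (1 - Plam p pol γf lf) * Φ)

/-!
Write `Q = P^λ_{π,γ}`, `d_i = d_{π°,i}` and `m = diag(M̄) = d_iᵀ (I − Q)⁻¹`, so that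
`mᵀ (I − Q) = d_iᵀ` and `θᵀ C θ = −xᵀ M̄ (I − Q) x` with `x = Φ θ`. By Assumption 1(i), `Q` is
a nonnegative substochastic matrix whose powers tend to `0`, so `(I − Q)⁻¹ = ∑ₖ Qᵏ ≥ 0` and
`m ≥ 0`. Symmetrising with `mᵀ (I − Q) = d_iᵀ` gives
`2 xᵀ M̄ (I − Q) x = ∑ₛ (mₛ (1 − ∑ₜ Qₛₜ) + d_i(s)) xₛ² + ∑ₛₜ mₛ Qₛₜ (xₛ − xₜ)²  ≥ 0`.
If it vanishes, `x` is zero where `d_i > 0` and constant along the edges of `Q` leaving emphasized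
states; every emphasized state is reached from some `s` with `d_i(s) > 0` through such edges, so
the form vanishes exactly when `x` is zero on the emphasized states. Hence `C` is negative
definite iff `Φ θ` vanishing on the emphasized states forces `θ = 0`, i.e. iff the emphasized
feature vectors span `ℝⁿ`.
-/

open Filter Topology

section NonnegativeMatrix

variable {ι : Type*} [Fintype ι]

lemma exists_pos_and_pos_of_sum_mul_pos {f g : ι → ℝ} (hf : ∀ i, 0 ≤ f i) (hg : ∀ i, 0 ≤ g i)
    (h : 0 < ∑ i, f i * g i) : ∃ i, 0 < f i ∧ 0 < g i := by
  obtain ⟨i, -, hi⟩ := Finset.exists_lt_of_sum_lt (s := Finset.univ) (f := 0)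
    (g := fun i => f i * g i) (by simpa using h)
  exact ⟨i, pos_of_mul_pos_left hi (hg i), pos_of_mul_pos_right hi (hf i)⟩

lemma mulVec_one_le_of_le {A B : Matrix ι ι ℝ} (hAB : ∀ i j, A i j ≤ B i j) (hB : B *ᵥ 1 ≤ 1) :
    A *ᵥ 1 ≤ 1 := fun i =>
  (dotProduct_le_dotProduct_of_nonneg_right (fun j => hAB i j) zero_le_one).trans (hB i)

variable [DecidableEq ι]

lemma mul_diagonal_apply_le {A : Matrix ι ι ℝ} {l : ι → ℝ} (hA : ∀ i j, 0 ≤ A i j) (hl : l ≤ 1)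
    (i j : ι) : (A * diagonal l) i j ≤ A i j := by
  rw [mul_diagonal]
  exact mul_le_of_le_one_right (hA i j) (hl j)

lemma pow_apply_le_pow_apply {A B : Matrix ι ι ℝ} (hA : ∀ i j, 0 ≤ A i j)
    (hAB : ∀ i j, A i j ≤ B i j) (k : ℕ) (i j : ι) : (A ^ k) i j ≤ (B ^ k) i j := by
  induction k generalizing j with
  | zero => rfl
  | succ k ih =>
    simp only [pow_succ, mul_apply]
    exact Finset.sum_le_sum fun l _ => mul_le_mul (ih l) (hAB l j) (hA l j)
      ((pow_apply_nonneg hA k i l).trans (ih l))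

lemma isUnit_one_sub_of_tendsto_pow {K : Type*} [Field K] [TopologicalSpace K]
    [IsTopologicalRing K] [T2Space K] {A : Matrix ι ι K}
    (hA : Tendsto (fun k => A ^ k) atTop (𝓝 0)) : IsUnit (1 - A) := by
  rw [isUnit_iff_isUnit_det, isUnit_iff_ne_zero, Ne, ← exists_mulVec_eq_zero_iff]
  rintro ⟨v, hv, hAv⟩
  have hfix : ∀ k, A ^ k *ᵥ v = v := by
    have : A *ᵥ v = v := by rwa [sub_mulVec, one_mulVec, sub_eq_zero, eq_comm] at hAv
    intro k
    induction k with
    | zero => simp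
    | succ k ih => rw [pow_succ, ← mulVec_mulVec, this, ih]
  have hlim : Tendsto (fun k => A ^ k *ᵥ v) atTop (𝓝 (0 *ᵥ v)) :=
    ((continuous_id.matrix_mulVec continuous_const).tendsto 0).comp hA
  simp only [hfix, zero_mulVec] at hlim
  exact hv (tendsto_nhds_unique tendsto_const_nhds hlim)

/-- The row sums `B ^ k *ᵥ 1` decrease to a fixed vector of `B`, which vanishes when `1 - B` is
invertible; the entries of `B ^ k` are squeezed below them. -/
lemma tendsto_pow_of_isUnit_one_sub {B : Matrix ι ι ℝ} (h0 : ∀ i j, 0 ≤ B i j)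
    (h1 : B *ᵥ 1 ≤ 1) (hB : IsUnit (1 - B)) : Tendsto (fun k => B ^ k) atTop (𝓝 0) := by
  set w : ℕ → ι → ℝ := fun k => B ^ k *ᵥ 1
  have hw_nonneg : ∀ k i, 0 ≤ w k i := fun k i =>
    dotProduct_nonneg_of_nonneg (pow_apply_nonneg h0 k i) zero_le_one
  have hw_anti : ∀ i, Antitone fun k => w k i := fun i => antitone_nat_of_succ_le fun k => by
    simp only [w, pow_succ, ← mulVec_mulVec]
    exact dotProduct_le_dotProduct_of_nonneg_left h1 (pow_apply_nonneg h0 k i)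
  obtain ⟨L, hL⟩ : ∃ L, Tendsto w atTop (𝓝 L) :=
    ⟨_, tendsto_pi_nhds.2 fun i => tendsto_atTop_ciInf (hw_anti i) ⟨0, by
      rintro _ ⟨k, rfl⟩; exact hw_nonneg k i⟩⟩
  have hL0 : L = 0 := by
    have hfix : B *ᵥ L = L := by
      refine tendsto_nhds_unique ?_ ((tendsto_add_atTop_iff_nat 1).2 hL)
      simp only [w, pow_succ', ← mulVec_mulVec]
      exact ((continuous_const.matrix_mulVec continuous_id).tendsto L).comp hL
    exact mulVec_injective_iff_isUnit.2 hB (by rw [sub_mulVec, one_mulVec, hfix, sub_self,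
      mulVec_zero])
  subst hL0
  refine tendsto_pi_nhds.2 fun i => tendsto_pi_nhds.2 fun j => ?_
  refine tendsto_of_tendsto_of_tendsto_of_le_of_le tendsto_const_nhds
    (tendsto_pi_nhds.1 hL i) (fun k => pow_apply_nonneg h0 k i j) fun k => ?_
  simpa [w, mulVec, dotProduct] using
    Finset.single_le_sum (fun l _ => pow_apply_nonneg h0 k i l) (Finset.mem_univ j)

lemma tendsto_pow_of_le {A B : Matrix ι ι ℝ} (hA : ∀ i j, 0 ≤ A i j) (hAB : ∀ i j, A i j ≤ B i j)
    (hB : Tendsto (fun k => B ^ k) atTop (𝓝 0)) : Tendsto (fun k => A ^ k) atTop (𝓝 0) :=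
  tendsto_pi_nhds.2 fun i => tendsto_pi_nhds.2 fun j =>
    tendsto_of_tendsto_of_tendsto_of_le_of_le tendsto_const_nhds
      (tendsto_pi_nhds.1 (tendsto_pi_nhds.1 hB i) j) (fun k => pow_apply_nonneg hA k i j)
      fun k => pow_apply_le_pow_apply hA hAB k i j

lemma hasSum_pow_of_tendsto {B : Matrix ι ι ℝ} (h0 : ∀ i j, 0 ≤ B i j)
    (hB : Tendsto (fun k => B ^ k) atTop (𝓝 0)) : HasSum (fun k => B ^ k) (1 - B)⁻¹ := by
  have hdet := (isUnit_iff_isUnit_det _).1 (isUnit_one_sub_of_tendsto_pow hB)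
  have hpartial : Tendsto (fun K => ∑ k ∈ Finset.range K, B ^ k) atTop (𝓝 (1 - B)⁻¹) := by
    have hsum : ∀ K, ∑ k ∈ Finset.range K, B ^ k = (1 - B)⁻¹ * (1 - B ^ K) := fun K => by
      rw [← mul_neg_geom_sum, ← Matrix.mul_assoc, nonsing_inv_mul _ hdet, Matrix.one_mul]
    simp only [hsum]
    simpa using (tendsto_const_nhds (x := (1 - B)⁻¹)).mul
      ((tendsto_const_nhds (x := (1 : Matrix ι ι ℝ))).sub hB)
  refine Pi.hasSum.2 fun i => Pi.hasSum.2 fun j => ?_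
  refine (hasSum_iff_tendsto_nat_of_nonneg (fun k => pow_apply_nonneg h0 k i j) _).2 ?_
  simpa [Matrix.sum_apply] using tendsto_pi_nhds.1 (tendsto_pi_nhds.1 hpartial i) j

lemma inv_one_sub_apply_nonneg {B : Matrix ι ι ℝ} (h0 : ∀ i j, 0 ≤ B i j)
    (hB : Tendsto (fun k => B ^ k) atTop (𝓝 0)) (i j : ι) : 0 ≤ (1 - B)⁻¹ i j :=
  (Pi.hasSum.1 (Pi.hasSum.1 (hasSum_pow_of_tendsto h0 hB) i) j).nonneg
    fun k => pow_apply_nonneg h0 k i j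

lemma pow_apply_le_inv_one_sub_apply {B : Matrix ι ι ℝ} (h0 : ∀ i j, 0 ≤ B i j)
    (hB : Tendsto (fun k => B ^ k) atTop (𝓝 0)) (k : ℕ) (i j : ι) :
    (B ^ k) i j ≤ (1 - B)⁻¹ i j :=
  le_hasSum (Pi.hasSum.1 (Pi.hasSum.1 (hasSum_pow_of_tendsto h0 hB) i) j) k
    fun k _ => pow_apply_nonneg h0 k i j

lemma exists_pow_apply_pos_of_inv_one_sub_apply_pos {B : Matrix ι ι ℝ} (h0 : ∀ i j, 0 ≤ B i j)
    (hB : Tendsto (fun k => B ^ k) atTop (𝓝 0)) {i j : ι} (hij : 0 < (1 - B)⁻¹ i j) :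
    ∃ k, 0 < (B ^ k) i j := by
  by_contra! h
  have hsum := Pi.hasSum.1 (Pi.hasSum.1 (hasSum_pow_of_tendsto h0 hB) i) j
  rw [show (fun k => (B ^ k) i j) = 0 from
    funext fun k => le_antisymm (h k) (pow_apply_nonneg h0 k i j)] at hsum
  exact hij.ne' (hsum.unique hasSum_zero)

end NonnegativeMatrix

section LambdaReturn

variable {ι : Type*} [Fintype ι] [DecidableEq ι] {B : Matrix ι ι ℝ} {l : ι → ℝ}

lemma mul_diagonal_apply_nonneg (h0 : ∀ i j, 0 ≤ B i j) (hl0 : 0 ≤ l) (i j : ι) :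
    0 ≤ (B * diagonal l) i j := by
  rw [mul_diagonal]
  exact mul_nonneg (h0 i j) (hl0 j)

lemma tendsto_pow_mul_diagonal (h0 : ∀ i j, 0 ≤ B i j) (h1 : B *ᵥ 1 ≤ 1) (hB : IsUnit (1 - B))
    (hl0 : 0 ≤ l) (hl1 : l ≤ 1) : Tendsto (fun k => (B * diagonal l) ^ k) atTop (𝓝 0) :=
  tendsto_pow_of_le (mul_diagonal_apply_nonneg h0 hl0) (mul_diagonal_apply_le h0 hl1)
    (tendsto_pow_of_isUnit_one_sub h0 h1 hB)

lemma one_sub_inv_mul_one_sub_apply_nonneg (h0 : ∀ i j, 0 ≤ B i j) (h1 : B *ᵥ 1 ≤ 1)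
    (hB : IsUnit (1 - B)) (hl0 : 0 ≤ l) (hl1 : l ≤ 1) (i j : ι) :
    0 ≤ (1 - (1 - B * diagonal l)⁻¹ * (1 - B)) i j := by
  have hA := tendsto_pow_mul_diagonal h0 h1 hB hl0 hl1
  have hdet := (isUnit_iff_isUnit_det _).1 (isUnit_one_sub_of_tendsto_pow hA)
  have heq : 1 - (1 - B * diagonal l)⁻¹ * (1 - B) =
      (1 - B * diagonal l)⁻¹ * (B - B * diagonal l) := calc
    _ = (1 - B * diagonal l)⁻¹ * (1 - B * diagonal l) - (1 - B * diagonal l)⁻¹ * (1 - B) := by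
      rw [nonsing_inv_mul _ hdet]
    _ = _ := by rw [← Matrix.mul_sub, sub_sub_sub_cancel_left]
  rw [heq, mul_apply]
  exact Finset.sum_nonneg fun k _ => mul_nonneg
    (inv_one_sub_apply_nonneg (mul_diagonal_apply_nonneg h0 hl0) hA i k)
    (sub_nonneg.2 (mul_diagonal_apply_le h0 hl1 k j))

lemma one_sub_inv_mul_one_sub_mulVec_one_le (h0 : ∀ i j, 0 ≤ B i j) (h1 : B *ᵥ 1 ≤ 1)
    (hB : IsUnit (1 - B)) (hl0 : 0 ≤ l) (hl1 : l ≤ 1) :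
    (1 - (1 - B * diagonal l)⁻¹ * (1 - B)) *ᵥ 1 ≤ 1 := by
  have hA := tendsto_pow_mul_diagonal h0 h1 hB hl0 hl1
  have hslack : 0 ≤ (1 - B) *ᵥ 1 := by
    rw [sub_mulVec, one_mulVec]
    exact sub_nonneg.2 h1
  rw [sub_mulVec, one_mulVec, ← mulVec_mulVec, sub_le_self_iff]
  exact fun i => dotProduct_nonneg_of_nonneg
    (inv_one_sub_apply_nonneg (mul_diagonal_apply_nonneg h0 hl0) hA i) hslack

lemma tendsto_pow_one_sub_inv_mul_one_sub (h0 : ∀ i j, 0 ≤ B i j) (h1 : B *ᵥ 1 ≤ 1)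
    (hB : IsUnit (1 - B)) (hl0 : 0 ≤ l) (hl1 : l ≤ 1) :
    Tendsto (fun k => (1 - (1 - B * diagonal l)⁻¹ * (1 - B)) ^ k) atTop (𝓝 0) := by
  have hA := isUnit_one_sub_of_tendsto_pow (tendsto_pow_mul_diagonal h0 h1 hB hl0 hl1)
  refine tendsto_pow_of_isUnit_one_sub (one_sub_inv_mul_one_sub_apply_nonneg h0 h1 hB hl0 hl1)
    (one_sub_inv_mul_one_sub_mulVec_one_le h0 h1 hB hl0 hl1) ?_
  rw [sub_sub_cancel]
  exact (isUnit_nonsing_inv_iff.2 hA).mul hB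

end LambdaReturn

section EmphasisForm

variable {ι : Type*} [Fintype ι] [DecidableEq ι] {Q : Matrix ι ι ℝ} {m di : ι → ℝ}

lemma two_mul_dotProduct_diagonal_mul_one_sub_mulVec (hm : m ᵥ* (1 - Q) = di) (x : ι → ℝ) :
    2 * (x ⬝ᵥ (diagonal m * (1 - Q)) *ᵥ x) =
      ∑ s, (m s * (1 - (Q *ᵥ 1) s) + di s) * x s ^ 2 +
        ∑ s, ∑ t, m s * Q s t * (x s - x t) ^ 2 := by
  have hdi : ∀ t, di t = m t - ∑ s, m s * Q s t := fun t => by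
    simp [← hm, vecMul, dotProduct, mul_sub, Finset.sum_sub_distrib, one_apply]
  have e1 : x ⬝ᵥ (diagonal m * (1 - Q)) *ᵥ x =
      ∑ s, m s * x s ^ 2 - ∑ s, ∑ t, m s * Q s t * (x s * x t) := by
    rw [← mulVec_mulVec, sub_mulVec, one_mulVec]
    simp only [dotProduct, mulVec_diagonal, Pi.sub_apply]
    simp only [mulVec, dotProduct, mul_sub, Finset.sum_sub_distrib, Finset.mul_sum]
    congr 1
    · exact Finset.sum_congr rfl fun s _ => by ring
    · exact Finset.sum_congr rfl fun s _ => Finset.sum_congr rfl fun t _ => by ring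
  have e2 : ∑ s, (m s * (1 - (Q *ᵥ 1) s) + di s) * x s ^ 2 =
      2 * ∑ s, m s * x s ^ 2 - ∑ s, ∑ t, m s * Q s t * x s ^ 2
        - ∑ s, ∑ t, m s * Q s t * x t ^ 2 := by
    rw [Finset.sum_comm (f := fun s t => m s * Q s t * x t ^ 2), two_mul]
    simp only [hdi, mulVec, dotProduct, Pi.one_apply, mul_one, mul_sub, add_mul, sub_mul,
      Finset.sum_add_distrib, Finset.sum_sub_distrib, Finset.mul_sum, Finset.sum_mul]
    ring_nf
  have e3 : ∑ s, ∑ t, m s * Q s t * (x s - x t) ^ 2 = ∑ s, ∑ t, m s * Q s t * x s ^ 2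
      - 2 * ∑ s, ∑ t, m s * Q s t * (x s * x t) + ∑ s, ∑ t, m s * Q s t * x t ^ 2 := by
    simp only [sub_sq, mul_add, mul_sub, Finset.sum_add_distrib, Finset.sum_sub_distrib,
      Finset.mul_sum]
    ring_nf
  rw [e1, e2, e3]
  ring

lemma dotProduct_diagonal_mul_one_sub_mulVec_nonneg (hQ0 : ∀ i j, 0 ≤ Q i j)
    (hQ1 : Q *ᵥ 1 ≤ 1) (hm0 : 0 ≤ m) (hdi : 0 ≤ di) (hm : m ᵥ* (1 - Q) = di) (x : ι → ℝ) :
    0 ≤ x ⬝ᵥ (diagonal m * (1 - Q)) *ᵥ x := by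
  have hid := two_mul_dotProduct_diagonal_mul_one_sub_mulVec hm x
  have h1 : 0 ≤ ∑ s, (m s * (1 - (Q *ᵥ 1) s) + di s) * x s ^ 2 := Finset.sum_nonneg fun s _ =>
    mul_nonneg (add_nonneg (mul_nonneg (hm0 s) (sub_nonneg.2 (hQ1 s))) (hdi s)) (sq_nonneg _)
  have h2 : 0 ≤ ∑ s, ∑ t, m s * Q s t * (x s - x t) ^ 2 := Finset.sum_nonneg fun s _ =>
    Finset.sum_nonneg fun t _ => mul_nonneg (mul_nonneg (hm0 s) (hQ0 s t)) (sq_nonneg _)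
  linarith

lemma of_dotProduct_diagonal_mul_one_sub_mulVec_eq_zero (hQ0 : ∀ i j, 0 ≤ Q i j)
    (hQ1 : Q *ᵥ 1 ≤ 1) (hm0 : 0 ≤ m) (hdi : 0 ≤ di) (hm : m ᵥ* (1 - Q) = di) {x : ι → ℝ}
    (hx : x ⬝ᵥ (diagonal m * (1 - Q)) *ᵥ x = 0) :
    (∀ s, 0 < di s → x s = 0) ∧ ∀ s t, 0 < m s → 0 < Q s t → x s = x t := by
  have hid := two_mul_dotProduct_diagonal_mul_one_sub_mulVec hm x
  have hc : ∀ s, 0 ≤ m s * (1 - (Q *ᵥ 1) s) := fun s =>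
    mul_nonneg (hm0 s) (sub_nonneg.2 (hQ1 s))
  have h1 : ∀ s ∈ Finset.univ, 0 ≤ (m s * (1 - (Q *ᵥ 1) s) + di s) * x s ^ 2 := fun s _ =>
    mul_nonneg (add_nonneg (hc s) (hdi s)) (sq_nonneg _)
  have h2 : ∀ s ∈ Finset.univ, ∀ t ∈ Finset.univ, 0 ≤ m s * Q s t * (x s - x t) ^ 2 :=
    fun s _ t _ => mul_nonneg (mul_nonneg (hm0 s) (hQ0 s t)) (sq_nonneg _)
  have h2' : ∀ s ∈ Finset.univ, 0 ≤ ∑ t, m s * Q s t * (x s - x t) ^ 2 := fun s hs =>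
    Finset.sum_nonneg (h2 s hs)
  rw [hx, mul_zero] at hid
  have hsum1 := (Finset.sum_eq_zero_iff_of_nonneg h1).1
    (by linarith [Finset.sum_nonneg h1, Finset.sum_nonneg h2'])
  have hsum2 := (Finset.sum_eq_zero_iff_of_nonneg h2').1
    (by linarith [Finset.sum_nonneg h1, Finset.sum_nonneg h2'])
  refine ⟨fun s hs => ?_, fun s t hs ht => ?_⟩
  · have := hsum1 s (Finset.mem_univ s)
    rwa [mul_eq_zero, or_iff_right (add_pos_of_nonneg_of_pos (hc s) hs).ne', sq_eq_zero_iff] at this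
  · have := (Finset.sum_eq_zero_iff_of_nonneg (h2 s (Finset.mem_univ s))).1
      (hsum2 s (Finset.mem_univ s)) t (Finset.mem_univ t)
    rwa [mul_eq_zero, or_iff_right (mul_pos hs ht).ne', sq_eq_zero_iff, sub_eq_zero] at this

lemma eq_zero_of_vecMul_inv_one_sub_pos (hQ0 : ∀ i j, 0 ≤ Q i j)
    (hQ : Tendsto (fun k => Q ^ k) atTop (𝓝 0)) (hdi : 0 ≤ di) {x : ι → ℝ}
    (hzero : ∀ s, 0 < di s → x s = 0)
    (hconst : ∀ s t, 0 < (di ᵥ* (1 - Q)⁻¹) s → 0 < Q s t → x s = x t)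
    {s : ι} (hs : 0 < (di ᵥ* (1 - Q)⁻¹) s) : x s = 0 := by
  have hinv := inv_one_sub_apply_nonneg hQ0 hQ
  have hreach : ∀ k t s, 0 < di t → 0 < (Q ^ k) t s → x s = 0 := by
    intro k
    induction k with
    | zero =>
      intro t s ht hts
      obtain rfl : t = s := by
        by_contra h
        rw [pow_zero, one_apply_ne h] at hts
        exact hts.false
      exact hzero t ht
    | succ k ih =>
      intro t s ht hts
      rw [pow_succ, mul_apply] at hts
      obtain ⟨u, htu, hus⟩ := exists_pos_and_pos_of_sum_mul_pos (pow_apply_nonneg hQ0 k t)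
        (fun u => hQ0 u s) hts
      have hu : 0 < (di ᵥ* (1 - Q)⁻¹) u := calc
        0 < di t * (1 - Q)⁻¹ t u :=
          mul_pos ht (htu.trans_le (pow_apply_le_inv_one_sub_apply hQ0 hQ k t u))
        _ ≤ ∑ t', di t' * (1 - Q)⁻¹ t' u :=
          Finset.single_le_sum (fun t' _ => mul_nonneg (hdi t') (hinv t' u)) (Finset.mem_univ t)
      rw [← hconst u s hu hus, ih t u ht htu]
  obtain ⟨t, ht, hts⟩ := exists_pos_and_pos_of_sum_mul_pos hdi (fun t => hinv t s) hs
  obtain ⟨k, hk⟩ := exists_pow_apply_pos_of_inv_one_sub_apply_pos hQ0 hQ hts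
  exact hreach k t s ht hk

lemma dotProduct_diagonal_mul_one_sub_mulVec_pos_iff (hQ0 : ∀ i j, 0 ≤ Q i j)
    (hQ1 : Q *ᵥ 1 ≤ 1) (hQ : Tendsto (fun k => Q ^ k) atTop (𝓝 0)) (hdi : 0 ≤ di) (x : ι → ℝ) :
    0 < x ⬝ᵥ (diagonal (di ᵥ* (1 - Q)⁻¹) * (1 - Q)) *ᵥ x ↔
      ∃ s, 0 < (di ᵥ* (1 - Q)⁻¹) s ∧ x s ≠ 0 := by
  have hm0 : 0 ≤ di ᵥ* (1 - Q)⁻¹ := fun s =>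
    dotProduct_nonneg_of_nonneg hdi fun t => inv_one_sub_apply_nonneg hQ0 hQ t s
  have hm : di ᵥ* (1 - Q)⁻¹ ᵥ* (1 - Q) = di := by
    rw [vecMul_vecMul, nonsing_inv_mul _ ((isUnit_iff_isUnit_det _).1
      (isUnit_one_sub_of_tendsto_pow hQ)), vecMul_one]
  rw [(dotProduct_diagonal_mul_one_sub_mulVec_nonneg hQ0 hQ1 hm0 hdi hm x).lt_iff_ne']
  constructor
  · intro hx
    by_contra! hzero
    refine hx (Finset.sum_eq_zero fun s _ => ?_)
    rw [← mulVec_mulVec, mulVec_diagonal]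
    rcases (hm0 s).lt_or_eq with hs | hs
    · rw [hzero s hs, zero_mul]
    · rw [← hs, Pi.zero_apply, zero_mul, mul_zero]
  · rintro ⟨s, hs, hxs⟩ hx
    obtain ⟨hzero, hconst⟩ :=
      of_dotProduct_diagonal_mul_one_sub_mulVec_eq_zero hQ0 hQ1 hm0 hdi hm hx
    exact hxs (eq_zero_of_vecMul_inv_one_sub_pos hQ0 hQ hdi hzero hconst hs)

end EmphasisForm

/-- Positivity on the unit sphere, which is compact, bounds the form away from `0`. -/
lemma exists_forall_dotProduct_mulVec_le_neg_mul_iff {n : ℕ} (G : Matrix (Fin n) (Fin n) ℝ) :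
    (∃ c : ℝ, 0 < c ∧ ∀ θ : Fin n → ℝ, θ ⬝ᵥ G *ᵥ θ ≤ -c * (θ ⬝ᵥ θ)) ↔
      ∀ θ : Fin n → ℝ, θ ≠ 0 → θ ⬝ᵥ G *ᵥ θ < 0 := by
  have hpos : ∀ θ : Fin n → ℝ, θ ≠ 0 → 0 < θ ⬝ᵥ θ := fun θ hθ =>
    (Finset.sum_nonneg fun i _ => mul_self_nonneg (θ i)).lt_of_ne'
      (dotProduct_self_eq_zero.not.2 hθ)
  constructor
  · rintro ⟨c, hc, h⟩ θ hθ
    nlinarith [h θ, hpos θ hθ]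
  · intro h
    set ratio : (Fin n → ℝ) → ℝ := fun θ => -(θ ⬝ᵥ G *ᵥ θ) / (θ ⬝ᵥ θ)
    have hsphere : ∀ θ ∈ Metric.sphere (0 : Fin n → ℝ) 1, θ ≠ 0 := fun θ hθ h0 => by
      simp [h0] at hθ
    have hratio_pos : ∀ θ, θ ≠ 0 → 0 < ratio θ := fun θ hθ =>
      div_pos (neg_pos.2 (h θ hθ)) (hpos θ hθ)
    obtain ⟨c, hc, hmin⟩ := (isCompact_sphere (0 : Fin n → ℝ) 1).exists_forall_le'
      (ContinuousOn.div (by fun_prop) (by fun_prop) fun θ hθ =>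
        dotProduct_self_eq_zero.not.2 (hsphere θ hθ))
      fun θ hθ => hratio_pos θ (hsphere θ hθ)
    refine ⟨c, hc, fun θ => ?_⟩
    rcases eq_or_ne θ 0 with rfl | hθ
    · simp
    have hnorm : ‖θ‖ ≠ 0 := norm_ne_zero_iff.2 hθ
    have hscale : ratio (‖θ‖⁻¹ • θ) = ratio θ := by
      simp only [ratio, mulVec_smul, dotProduct_smul, smul_dotProduct, smul_eq_mul]
      field_simp
    have hθmin : c ≤ ratio (‖θ‖⁻¹ • θ) := hmin (‖θ‖⁻¹ • θ) (by simp [norm_smul, hnorm])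
    rw [hscale, le_div_iff₀ (hpos θ hθ)] at hθmin
    linarith

lemma exists_linearIndependent_comp_iff {K : Type*} [Field K] {κ : Type*} [Finite κ] {n : ℕ}
    (v : κ → Fin n → K) :
    (∃ f : Fin n → κ, LinearIndependent K (v ∘ f)) ↔ ∀ θ, (∀ i, v i ⬝ᵥ θ = 0) → θ = 0 := by
  constructor
  · rintro ⟨f, hf⟩ θ hθ
    have hunit : IsUnit (Matrix.of (v ∘ f)) := linearIndependent_rows_iff_isUnit.1 hf
    exact mulVec_injective_iff_isUnit.2 hunit (by ext j; simpa [mulVec] using hθ (f j))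
  · intro h
    have hinj : Function.Injective (Matrix.of v).mulVecLin := by
      rw [← LinearMap.ker_eq_bot, ker_mulVecLin_eq_bot_iff]
      exact fun θ hθ => h θ fun i => congrFun hθ i
    have hspan : Module.finrank K (Submodule.span K (Set.range v)) = n := by
      have := (Matrix.of v).rank_eq_finrank_span_row
      rw [Matrix.rank, LinearMap.finrank_range_of_inj hinj, Module.finrank_fin_fun] at this
      exact this.symm
    obtain ⟨ι', a, ha, hspan', hli⟩ := exists_linearIndependent' K v
    have : Finite ι' := Finite.of_injective a ha
    have : Fintype ι' := Fintype.ofFinite ι'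
    have hcard : Fintype.card ι' = n := by
      rw [← hspan, ← hspan', finrank_span_eq_card hli]
    let e : Fin n ≃ ι' := (Fintype.equivFinOfCardEq hcard).symm
    exact ⟨a ∘ e, hli.comp e e.injective⟩

lemma dotProduct_transpose_mul_mul_mulVec {ι κ : Type*} [Fintype ι] [Fintype κ]
    (Φ : Matrix ι κ ℝ) (G : Matrix ι ι ℝ) (θ : κ → ℝ) :
    θ ⬝ᵥ (Φᵀ * G * Φ) *ᵥ θ = (Φ *ᵥ θ) ⬝ᵥ G *ᵥ (Φ *ᵥ θ) := by
  rw [← mulVec_mulVec, ← mulVec_mulVec, dotProduct_mulVec, vecMul_transpose]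

section ETD

variable {N M : ℕ} {p : Fin N → Fin M → Fin N → ℝ} {pol : Fin N → Fin M → ℝ}

lemma Pmat_apply_nonneg (hp0 : ∀ s a s', 0 ≤ p s a s') (hpol0 : ∀ s a, 0 ≤ pol s a)
    (s s' : Fin N) : 0 ≤ Pmat p pol s s' := by
  rw [Pmat, of_apply]
  exact Finset.sum_nonneg fun a _ => mul_nonneg (hpol0 s a) (hp0 s a s')

lemma Pmat_mulVec_one (hp1 : ∀ s a, ∑ s', p s a s' = 1) (hpol1 : ∀ s, ∑ a, pol s a = 1) :
    Pmat p pol *ᵥ 1 = 1 := by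
  ext s
  simp only [mulVec, dotProduct, Pmat, of_apply, Pi.one_apply, mul_one]
  rw [Finset.sum_comm]
  simp [← Finset.mul_sum, hp1, hpol1]

lemma dotProduct_Cmat_mulVec {n : ℕ} (γf lf d iF : Fin N → ℝ) (Φ : Matrix (Fin N) (Fin n) ℝ)
    (θ : Fin n → ℝ) :
    θ ⬝ᵥ Cmat p pol γf lf d iF Φ *ᵥ θ =
      -((Φ *ᵥ θ) ⬝ᵥ (diagonal (MbarDiag p pol γf lf d iF) * (1 - Plam p pol γf lf)) *ᵥ
        (Φ *ᵥ θ)) := by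
  rw [Cmat, neg_mulVec, dotProduct_neg, Matrix.mul_assoc Φᵀ,
    dotProduct_transpose_mul_mul_mulVec]

end ETD

theorem C_negDef_iff_assumption2_general
    {N M n : ℕ}
    (p : Fin N → Fin M → Fin N → ℝ)        -- transition probabilities
    (π : Fin N → Fin M → ℝ)             -- target and behavior policies
    (γf lf iF d : Fin N → ℝ)               -- discount factors, λ-function, interest, steady-state
    (Φ : Matrix (Fin N) (Fin n) ℝ)         -- feature matrix (rows φ(s)ᵀ)
    -- MDP data conditions
    (hp0 : ∀ s a s', 0 ≤ p s a s') (hp1 : ∀ s a, ∑ s', p s a s' = 1)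
    (hπ0 : ∀ s a, 0 ≤ π s a) (hπ1 : ∀ s, ∑ a, π s a = 1)
    (hγ : ∀ s, 0 ≤ γf s ∧ γf s ≤ 1)
    (hlf : ∀ s, 0 ≤ lf s ∧ lf s ≤ 1)
    (hi : ∀ s, 0 ≤ iF s)
    -- Assumption 1(i): (I − P_π Γ)⁻¹ exists
    (hA1i : IsUnit (1 - Pmat p π * Matrix.diagonal γf))
    -- d is the steady-state distribution of the behavior policy's state chain
    (hd0 : ∀ s, 0 < d s) :
    -- C is negative definite ↔ Assumption 2
    (∃ c : ℝ, 0 < c ∧ ∀ θ : Fin n → ℝ,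
        θ ⬝ᵥ (Cmat p π γf lf d iF Φ).mulVec θ ≤ -c * (θ ⬝ᵥ θ))
      ↔
    (∃ f : Fin n → Fin N, (∀ j, 0 < MbarDiag p π γf lf d iF (f j)) ∧
        LinearIndependent ℝ fun j => (Φ (f j) : Fin n → ℝ)) := by
  have hP0 := Pmat_apply_nonneg hp0 hπ0
  have hB0 := mul_diagonal_apply_nonneg hP0 (fun s => (hγ s).1)
  have hB1 := mulVec_one_le_of_le (mul_diagonal_apply_le hP0 fun s => (hγ s).2)
    (Pmat_mulVec_one hp1 hπ1).le
  have hl0 : 0 ≤ lf := fun s => (hlf s).1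
  have hl1 : lf ≤ 1 := fun s => (hlf s).2
  have hdi : 0 ≤ fun s => d s * iF s := fun s => mul_nonneg (hd0 s).le (hi s)
  have hpos : ∀ x, 0 < x ⬝ᵥ (diagonal (MbarDiag p π γf lf d iF) * (1 - Plam p π γf lf)) *ᵥ x ↔
      ∃ s, 0 < MbarDiag p π γf lf d iF s ∧ x s ≠ 0 :=
    dotProduct_diagonal_mul_one_sub_mulVec_pos_iff
      (one_sub_inv_mul_one_sub_apply_nonneg hB0 hB1 hA1i hl0 hl1)
      (one_sub_inv_mul_one_sub_mulVec_one_le hB0 hB1 hA1i hl0 hl1)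
      (tendsto_pow_one_sub_inv_mul_one_sub hB0 hB1 hA1i hl0 hl1) hdi
  rw [exists_forall_dotProduct_mulVec_le_neg_mul_iff]
  calc (∀ θ : Fin n → ℝ, θ ≠ 0 → θ ⬝ᵥ Cmat p π γf lf d iF Φ *ᵥ θ < 0)
      ↔ ∀ θ, (∀ s : {s // 0 < MbarDiag p π γf lf d iF s}, Φ s.1 ⬝ᵥ θ = 0) → θ = 0 := by
        refine forall_congr' fun θ => ?_
        rw [dotProduct_Cmat_mulVec, neg_lt_zero, hpos, ← not_imp_not]
        simp only [not_exists, not_and, not_not, Subtype.forall]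
        rfl
    _ ↔ ∃ f : Fin n → {s // 0 < MbarDiag p π γf lf d iF s},
          LinearIndependent ℝ fun j => Φ (f j).1 :=
        (exists_linearIndependent_comp_iff _).symm
    _ ↔ _ := ⟨fun ⟨f, hf⟩ => ⟨fun j => f j, fun j => (f j).2, hf⟩,
        fun ⟨f, hf, hli⟩ => ⟨fun j => ⟨f j, hf j⟩, hli⟩⟩

theorem C_negDef_iff_assumption2
    {N M n : ℕ}
    (p : Fin N → Fin M → Fin N → ℝ)        -- transition probabilities
    (π πb : Fin N → Fin M → ℝ)             -- target and behavior policies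
    (γf lf iF d : Fin N → ℝ)               -- discount factors, λ-function, interest, steady-state
    (Φ : Matrix (Fin N) (Fin n) ℝ)         -- feature matrix (rows φ(s)ᵀ)
    -- MDP data conditions
    (hp0 : ∀ s a s', 0 ≤ p s a s') (hp1 : ∀ s a, ∑ s', p s a s' = 1)
    (hπ0 : ∀ s a, 0 ≤ π s a) (hπ1 : ∀ s, ∑ a, π s a = 1)
    (hπb0 : ∀ s a, 0 ≤ πb s a) (hπb1 : ∀ s, ∑ a, πb s a = 1)
    (hγ : ∀ s, 0 ≤ γf s ∧ γf s ≤ 1) (hγ1 : ∃ s, γf s < 1)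
    (hlf : ∀ s, 0 ≤ lf s ∧ lf s ≤ 1)
    (hi : ∀ s, 0 ≤ iF s)
    -- Assumption 1(i): (I − P_π Γ)⁻¹ exists
    (hA1i : IsUnit (1 - Pmat p π * Matrix.diagonal γf))
    -- Assumption 1(ii): π° induces an irreducible chain and covers the support of π
    (hirr : ∀ s s', ∃ k : ℕ, 1 ≤ k ∧ 0 < (Pmat p πb ^ k) s s')
    (hsupp : ∀ s a, 0 < π s a → 0 < πb s a)
    -- d is the steady-state distribution of the behavior policy's state chain
    (hd0 : ∀ s, 0 < d s) (hd1 : ∑ s, d s = 1)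
    (hdstat : ∀ s', ∑ s, d s * Pmat p πb s s' = d s') :
    -- C is negative definite ↔ Assumption 2
    (∃ c : ℝ, 0 < c ∧ ∀ θ : Fin n → ℝ,
        θ ⬝ᵥ (Cmat p π γf lf d iF Φ).mulVec θ ≤ -c * (θ ⬝ᵥ θ))
      ↔
    (∃ f : Fin n → Fin N, (∀ j, 0 < MbarDiag p π γf lf d iF (f j)) ∧
        LinearIndependent ℝ fun j => (Φ (f j) : Fin n → ℝ)) :=
  C_negDef_iff_assumption2_general p π γf lf iF d Φ hp0 hp1 hπ0 hπ1 hγ hlf hi hA1i hd0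

end ETD0
end
end

section
/- Let c > 0 be such that xᵀCx ≤ −c|x|² for all x ∈ ℝⁿ, and suppose the closed ball B ⊂ ℝⁿ centered at the origin has radius r_B > |b|/c. Then: θ* lies in the interior of B; every solution x(τ), τ ∈ [0,∞), of the projected ODE ẋ = h̄(x) + z, z ∈ −N_B(x), with initial condition x(0) ∈ B coincides with the unique solution of ẋ = h̄(x) and has boundary reflection term z(·) ≡ 0; and the only solution x(τ), τ ∈ (−∞,∞), of the projected ODE that remains in B is the constant solution x(·) ≡ θ*. -/
/-!
Whenever `c|x| > |b|`, `x ⬝ (Cx + b) ≤ -c|x|² + |x||b| < 0`: the field `h̄` points strictly into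
the ball on its boundary sphere, and `θ*` (where `h̄` vanishes) has `|θ*| ≤ |b|/c < r_B`.
If a trajectory sat on the sphere at a time where it is differentiable from both sides, `|x|²`
would have a local maximum there with derivative `2 x ⬝ (h̄(x) + z) < 0`; so the reflection term
vanishes, at `τ = 0` as well because the one-sided derivative there is the limit of `h̄(x(τ))`.
Differences `w` of solutions of `ẋ = h̄(x)` solve `ẇ = Cw`, along which `e^{2cτ}|w|²` is
nonincreasing; this gives forward uniqueness, and for a bounded solution on all of `ℝ`, letting
the initial time tend to `-∞` forces `x - θ* = 0`.
-/

open Matrix Set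
open scoped Classical

noncomputable section
namespace ETD1

/-- Euclidean norm on `ℝⁿ`. -/
def eunorm {n : ℕ} (x : Fin n → ℝ) : ℝ := Real.sqrt (∑ j, x j ^ 2)

/-- The normal cone of the closed ball of radius `rB` centered at the origin, at the
point `x`: `{0}` in the interior, `{a • x | a ≥ 0}` on the boundary. -/
def normalCone {n : ℕ} (rB : ℝ) (x : Fin n → ℝ) : Set (Fin n → ℝ) :=
  if eunorm x < rB then {0} else {y | ∃ a : ℝ, 0 ≤ a ∧ y = a • x}

open Filter Topology

theorem hasDerivWithinAt_dotProduct {ι : Type*} [Fintype ι] {x y : ℝ → ι → ℝ}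
    {vx vy : ι → ℝ} {s : Set ℝ} {τ : ℝ}
    (hx : HasDerivWithinAt x vx s τ) (hy : HasDerivWithinAt y vy s τ) :
    HasDerivWithinAt (fun t => x t ⬝ᵥ y t) (vx ⬝ᵥ y τ + x τ ⬝ᵥ vy) s τ := by
  have h : HasDerivWithinAt (fun t => ∑ j, x t j * y t j)
      (∑ j, (vx j * y τ j + x τ j * vy j)) s τ :=
    HasDerivWithinAt.fun_sum fun j _ =>
      (hasDerivWithinAt_pi.1 hx j).mul (hasDerivWithinAt_pi.1 hy j)
  rw [Finset.sum_add_distrib] at h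
  exact h

theorem eq_of_hasDerivWithinAt_Ici_of_tendsto {E : Type*} [NormedAddCommGroup E]
    [NormedSpace ℝ E] {f g : ℝ → E} {a : ℝ} {v w : E} (hf : HasDerivWithinAt f v (Ici a) a)
    (hg : ∀ t ∈ Ioi a, HasDerivAt f (g t) t) (hlim : Tendsto g (𝓝[>] a) (𝓝 w)) : v = w := by
  have hw : HasDerivWithinAt f w (Ici a) a :=
    hasDerivWithinAt_Ici_of_tendsto_deriv
      (fun t ht => (hg t ht).differentiableAt.differentiableWithinAt)
      (hf.continuousWithinAt.mono Ioi_subset_Ici_self) self_mem_nhdsWithin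
      (hlim.congr' (eventually_nhdsWithin_of_forall fun t ht => (hg t ht).deriv.symm))
  exact (uniqueDiffOn_Ici a a self_mem_Ici).eq_deriv _ hf hw

variable {n : ℕ}

theorem eunorm_nonneg (x : Fin n → ℝ) : 0 ≤ eunorm x := Real.sqrt_nonneg _

theorem eunorm_sq (x : Fin n → ℝ) : eunorm x ^ 2 = x ⬝ᵥ x := by
  rw [eunorm, Real.sq_sqrt (by positivity)]
  simp only [dotProduct, sq]

theorem dotProduct_le_eunorm_mul_eunorm (x y : Fin n → ℝ) : x ⬝ᵥ y ≤ eunorm x * eunorm y :=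
  Real.sum_mul_le_sqrt_mul_sqrt _ x y

theorem dotProduct_self_nonneg (x : Fin n → ℝ) : 0 ≤ x ⬝ᵥ x := by
  rw [← eunorm_sq]; positivity

theorem sub_dotProduct_sub_le (x y : Fin n → ℝ) :
    (x - y) ⬝ᵥ (x - y) ≤ 2 * (x ⬝ᵥ x + y ⬝ᵥ y) := by
  have h := dotProduct_self_nonneg (x + y)
  simp only [add_dotProduct, dotProduct_add, sub_dotProduct, dotProduct_sub,
    dotProduct_comm y x] at h ⊢
  linarith

theorem eq_zero_of_exp_mul_dotProduct_self_nonpos {a : ℝ} {w : Fin n → ℝ}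
    (h : Real.exp a * (w ⬝ᵥ w) ≤ 0) : w = 0 :=
  dotProduct_self_eq_zero.1 <| le_antisymm
    (nonpos_of_mul_nonpos_right h (Real.exp_pos a)) (dotProduct_self_nonneg w)

theorem eq_zero_of_neg_mem_normalCone {rB : ℝ} {x z : Fin n → ℝ} (hx : eunorm x < rB)
    (hz : -z ∈ normalCone rB x) : z = 0 := by
  rw [normalCone, if_pos hx] at hz
  simpa using hz

variable {C : Matrix (Fin n) (Fin n) ℝ} {c : ℝ}

theorem dotProduct_mulVec_add_lt_zero (hC : ∀ x : Fin n → ℝ, x ⬝ᵥ C *ᵥ x ≤ -c * (x ⬝ᵥ x))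
    {b x : Fin n → ℝ} (hx : eunorm b < c * eunorm x) : x ⬝ᵥ (C *ᵥ x + b) < 0 := by
  have hpos : 0 < eunorm x := (eunorm_nonneg x).lt_of_ne fun h => by
    rw [← h, mul_zero] at hx
    exact (eunorm_nonneg b).not_gt hx
  have hCx := hC x
  have hxb := dotProduct_le_eunorm_mul_eunorm x b
  rw [← eunorm_sq] at hCx
  rw [dotProduct_add]
  nlinarith [mul_lt_mul_of_pos_left hx hpos]

theorem dotProduct_lt_zero_of_neg_mem_normalCone
    (hC : ∀ x : Fin n → ℝ, x ⬝ᵥ C *ᵥ x ≤ -c * (x ⬝ᵥ x)) {b : Fin n → ℝ} {rB : ℝ}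
    (hb : eunorm b < c * rB) {x z : Fin n → ℝ} (hx : eunorm x = rB)
    (hz : -z ∈ normalCone rB x) : x ⬝ᵥ (C *ᵥ x + b + z) < 0 := by
  rw [normalCone, if_neg hx.not_lt] at hz
  obtain ⟨a, ha, hz⟩ := hz
  have hxz : x ⬝ᵥ z = -(a * (x ⬝ᵥ x)) := by
    rw [← neg_neg z, hz, dotProduct_neg, dotProduct_smul, smul_eq_mul]
  rw [dotProduct_add, hxz]
  have := dotProduct_mulVec_add_lt_zero hC (hx ▸ hb : eunorm b < c * eunorm x)
  nlinarith [dotProduct_self_nonneg x]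

theorem eunorm_lt_of_hasDerivAt
    (hC : ∀ x : Fin n → ℝ, x ⬝ᵥ C *ᵥ x ≤ -c * (x ⬝ᵥ x)) {b : Fin n → ℝ} {rB : ℝ}
    (hb : eunorm b < c * rB) {x z : ℝ → Fin n → ℝ} {τ : ℝ}
    (hball : ∀ᶠ t in 𝓝 τ, eunorm (x t) ≤ rB) (hz : -z τ ∈ normalCone rB (x τ))
    (hx : HasDerivAt x (C *ᵥ x τ + b + z τ) τ) : eunorm (x τ) < rB := by
  by_contra! h
  have heq : eunorm (x τ) = rB := le_antisymm hball.self_of_nhds h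
  have hmax : IsLocalMax (fun t => x t ⬝ᵥ x t) τ := hball.mono fun t ht => by
    simp only [← eunorm_sq, heq]
    exact pow_le_pow_left₀ (eunorm_nonneg _) ht 2
  have hderiv :=
    (hasDerivWithinAt_dotProduct hx.hasDerivWithinAt hx.hasDerivWithinAt).hasDerivAt univ_mem
  have hzero := hmax.hasDerivAt_eq_zero hderiv
  rw [dotProduct_comm] at hzero
  linarith [dotProduct_lt_zero_of_neg_mem_normalCone hC hb heq hz]

theorem reflection_eq_zero_on_Ici
    (hC : ∀ x : Fin n → ℝ, x ⬝ᵥ C *ᵥ x ≤ -c * (x ⬝ᵥ x)) {b : Fin n → ℝ} {rB : ℝ}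
    (hb : eunorm b < c * rB) {x z : ℝ → Fin n → ℝ}
    (hxz : ∀ τ ∈ Ici (0:ℝ), eunorm (x τ) ≤ rB ∧ -z τ ∈ normalCone rB (x τ) ∧
      HasDerivWithinAt x (C *ᵥ x τ + b + z τ) (Ici 0) τ) :
    ∀ τ ∈ Ici (0:ℝ), z τ = 0 := by
  have hpos : ∀ τ ∈ Ioi (0:ℝ), z τ = 0 := fun τ hτ => by
    have hnhds : Ici (0:ℝ) ∈ 𝓝 τ := Ici_mem_nhds hτ
    obtain ⟨-, hcone, hder⟩ := hxz τ (Ioi_subset_Ici_self hτ)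
    refine eq_zero_of_neg_mem_normalCone ?_ hcone
    exact eunorm_lt_of_hasDerivAt hC hb (eventually_of_mem hnhds fun t ht => (hxz t ht).1)
      hcone (hder.hasDerivAt hnhds)
  have hode : ∀ τ ∈ Ioi (0:ℝ), HasDerivAt x (C *ᵥ x τ + b) τ := fun τ hτ => by
    have hder := (hxz τ (Ioi_subset_Ici_self hτ)).2.2.hasDerivAt (Ici_mem_nhds hτ)
    rwa [hpos τ hτ, add_zero] at hder
  have hfield : Continuous fun v => C *ᵥ v + b :=
    (continuous_const.matrix_mulVec continuous_id).add continuous_const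
  have hcont : ContinuousWithinAt (fun τ => C *ᵥ x τ + b) (Ioi 0) 0 :=
    hfield.continuousAt.comp_continuousWithinAt
      ((hxz 0 self_mem_Ici).2.2.continuousWithinAt.mono Ioi_subset_Ici_self)
  have hzero : z 0 = 0 := add_eq_left.1 <|
    eq_of_hasDerivWithinAt_Ici_of_tendsto (hxz 0 self_mem_Ici).2.2 hode hcont.tendsto
  intro τ hτ
  rcases (mem_Ici.1 hτ).eq_or_lt with h | h
  · exact h ▸ hzero
  · exact hpos τ h

theorem antitoneOn_exp_mul_dotProduct_self
    (hC : ∀ x : Fin n → ℝ, x ⬝ᵥ C *ᵥ x ≤ -c * (x ⬝ᵥ x)) {w : ℝ → Fin n → ℝ} {s : Set ℝ}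
    (hs : Convex ℝ s) (hw : ∀ τ ∈ s, HasDerivWithinAt w (C *ᵥ w τ) s τ) :
    AntitoneOn (fun t => Real.exp (2 * c * t) * (w t ⬝ᵥ w t)) s := by
  have hderiv : ∀ τ ∈ s, HasDerivWithinAt (fun t => Real.exp (2 * c * t) * (w t ⬝ᵥ w t))
      (2 * Real.exp (2 * c * τ) * (c * (w τ ⬝ᵥ w τ) + w τ ⬝ᵥ C *ᵥ w τ)) s τ := fun τ hτ => by
    have hexp := (((hasDerivAt_id' τ).const_mul (2 * c)).exp).hasDerivWithinAt (s := s)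
    refine (hexp.mul (hasDerivWithinAt_dotProduct (hw τ hτ) (hw τ hτ))).congr_deriv ?_
    rw [dotProduct_comm (C *ᵥ w τ)]
    ring
  refine antitoneOn_of_hasDerivWithinAt_nonpos hs (fun τ hτ => (hderiv τ hτ).continuousWithinAt)
    (fun τ hτ => (hderiv τ (interior_subset hτ)).mono interior_subset) fun τ _ => ?_
  have := hC (w τ)
  have := Real.exp_pos (2 * c * τ)
  nlinarith

theorem eq_zero_on_Ici_of_hasDerivWithinAt
    (hC : ∀ x : Fin n → ℝ, x ⬝ᵥ C *ᵥ x ≤ -c * (x ⬝ᵥ x)) {w : ℝ → Fin n → ℝ}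
    (hw : ∀ τ ∈ Ici (0:ℝ), HasDerivWithinAt w (C *ᵥ w τ) (Ici 0) τ) (h0 : w 0 = 0) :
    ∀ τ ∈ Ici (0:ℝ), w τ = 0 := by
  intro τ hτ
  have h : Real.exp (2 * c * τ) * (w τ ⬝ᵥ w τ) ≤ Real.exp (2 * c * 0) * (w 0 ⬝ᵥ w 0) :=
    antitoneOn_exp_mul_dotProduct_self hC (convex_Ici 0) hw self_mem_Ici hτ hτ
  rw [h0, dotProduct_zero, mul_zero] at h
  exact eq_zero_of_exp_mul_dotProduct_self_nonpos h

theorem eq_zero_of_hasDerivAt_of_bounded (hc : 0 < c)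
    (hC : ∀ x : Fin n → ℝ, x ⬝ᵥ C *ᵥ x ≤ -c * (x ⬝ᵥ x)) {w : ℝ → Fin n → ℝ}
    (hw : ∀ τ, HasDerivAt w (C *ᵥ w τ) τ) {K : ℝ} (hK : ∀ τ, w τ ⬝ᵥ w τ ≤ K) (τ : ℝ) :
    w τ = 0 := by
  have hanti := antitoneOn_exp_mul_dotProduct_self hC convex_univ
    fun σ _ => (hw σ).hasDerivWithinAt
  have hle : ∀ s ≤ τ, Real.exp (2 * c * τ) * (w τ ⬝ᵥ w τ) ≤ Real.exp (2 * c * s) * K :=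
    fun s hs => (hanti (mem_univ s) (mem_univ τ) hs).trans
      (mul_le_mul_of_nonneg_left (hK s) (Real.exp_pos _).le)
  have hlim : Tendsto (fun s => Real.exp (2 * c * s) * K) atBot (𝓝 0) := by
    simpa using (Real.tendsto_exp_atBot.comp
      (tendsto_id.const_mul_atBot (mul_pos two_pos hc))).mul_const K
  exact eq_zero_of_exp_mul_dotProduct_self_nonpos
    (ge_of_tendsto hlim (eventually_atBot.2 ⟨τ, hle⟩))

theorem lemma_pode {n : ℕ} (C : Matrix (Fin n) (Fin n) ℝ) (b θstar : Fin n → ℝ)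
    (c rB : ℝ) (hc : 0 < c)
    -- C is negative definite with modulus c: xᵀCx ≤ −c|x|²
    (hC : ∀ x : Fin n → ℝ, x ⬝ᵥ C.mulVec x ≤ -c * (x ⬝ᵥ x))
    -- θ* solves Cθ + b = 0
    (hθstar : C.mulVec θstar + b = 0)
    -- the ball radius exceeds the threshold |b|/c
    (hrB : eunorm b / c < rB) :
    -- (a) θ* lies in the interior of B
    eunorm θstar < rB ∧
    -- (b) every solution of the projected ODE on [0,∞) starting in B has z ≡ 0,
    --     solves ẋ = h̄(x), and is the unique such solution with its initial condition
    (∀ x z : ℝ → (Fin n → ℝ),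
      (∀ τ ∈ Ici (0:ℝ),
          eunorm (x τ) ≤ rB ∧ -z τ ∈ normalCone rB (x τ) ∧
          HasDerivWithinAt x (C.mulVec (x τ) + b + z τ) (Ici (0:ℝ)) τ) →
      (∀ τ ∈ Ici (0:ℝ), z τ = 0) ∧
      (∀ τ ∈ Ici (0:ℝ), HasDerivWithinAt x (C.mulVec (x τ) + b) (Ici (0:ℝ)) τ) ∧
      (∀ y : ℝ → (Fin n → ℝ), y 0 = x 0 →
        (∀ τ ∈ Ici (0:ℝ), HasDerivWithinAt y (C.mulVec (y τ) + b) (Ici (0:ℝ)) τ) →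
        ∀ τ ∈ Ici (0:ℝ), y τ = x τ)) ∧
    -- (c) the only solution of the projected ODE on (−∞,∞) remaining in B is x ≡ θ*
    (∀ x z : ℝ → (Fin n → ℝ),
      (∀ τ : ℝ, eunorm (x τ) ≤ rB ∧ -z τ ∈ normalCone rB (x τ) ∧
          HasDerivAt x (C.mulVec (x τ) + b + z τ) τ) →
      ∀ τ : ℝ, x τ = θstar) := by
  have hb : eunorm b < c * rB := (div_lt_iff₀' hc).1 hrB
  refine ⟨?_, fun x z hxz => ?_, fun x z hxz => ?_⟩
  · have hθ : ¬eunorm b < c * eunorm θstar := fun h =>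
      (dotProduct_mulVec_add_lt_zero hC h).ne (by rw [hθstar, dotProduct_zero])
    exact lt_of_mul_lt_mul_left ((not_lt.1 hθ).trans_lt hb) hc.le
  · have hz := reflection_eq_zero_on_Ici hC hb hxz
    have hode : ∀ τ ∈ Ici (0:ℝ), HasDerivWithinAt x (C *ᵥ x τ + b) (Ici 0) τ :=
      fun τ hτ => by simpa only [hz τ hτ, add_zero] using (hxz τ hτ).2.2
    refine ⟨hz, hode, fun y hy0 hy τ hτ => sub_eq_zero.1 ?_⟩
    refine eq_zero_on_Ici_of_hasDerivWithinAt hC (w := y - x) (fun σ hσ => ?_)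
      (by rw [Pi.sub_apply, hy0, sub_self]) τ hτ
    simpa only [Pi.sub_apply, mulVec_sub, add_sub_add_right_eq_sub] using (hy σ hσ).sub (hode σ hσ)
  · have hz : ∀ τ, z τ = 0 := fun τ => eq_zero_of_neg_mem_normalCone
      (eunorm_lt_of_hasDerivAt hC hb (.of_forall fun t => (hxz t).1) (hxz τ).2.1 (hxz τ).2.2)
      (hxz τ).2.1
    have hw : ∀ τ, HasDerivAt (fun t => x t - θstar) (C *ᵥ (x τ - θstar)) τ := fun τ => by
      have h := (hxz τ).2.2.sub_const θstar
      rwa [hz τ, add_zero, eq_neg_of_add_eq_zero_right hθstar, ← sub_eq_add_neg,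
        ← mulVec_sub] at h
    have hK : ∀ τ, (x τ - θstar) ⬝ᵥ (x τ - θstar) ≤ 2 * (rB ^ 2 + θstar ⬝ᵥ θstar) := fun τ =>
      (sub_dotProduct_sub_le _ _).trans <| by
        rw [← eunorm_sq (x τ)]
        gcongr
        exacts [eunorm_nonneg _, (hxz τ).1]
    exact fun τ => sub_eq_zero.1 (eq_zero_of_hasDerivAt_of_bounded hc hC hw hK τ)

end ETD1
end
end

section
/- Let Assumption 1 hold, and suppose i(s) > 0 for at least one state s ∈ 𝒮. Then C = −Φ₁ᵀ Ĝ Φ₁, where Ĝ = M̂(I − Q̂) is a positive definite matrix (xᵀĜx > 0 for all x ≠ 0), Φ₁ is the submatrix of Φ of the rows φ(s)ᵀ with s ∈ 𝒥₁ = {s : M̄_{ss} > 0}, Q̂ is the submatrix of P^λ_{π,γ} with row and column indices in 𝒥₁, M̂ is the diagonal matrix with diagonal entries M̄_{ss}, s ∈ 𝒥₁, and diag(M̂) = (d¹_{π°,i})ᵀ(I − Q̂)⁻¹ with d¹_{π°,i}(s) = d_{π°}(s)·i(s) for s ∈ 𝒥₁. -/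
/-!
The matrix `P^λ = 1 - (1 - PΓΛ)⁻¹ (1 - PΓ) = (1 - PΓΛ)⁻¹ (PΓ - PΓΛ)` is substochastic, and for a
substochastic `B` the matrix `1 - B` is invertible exactly when `B` is stochastic on no nonempty
set of states (a maximum principle). Hence `1 - P^λ` is invertible with a nonnegative inverse, so
`M̄ ≥ 0` and `M̄ᵀ P^λ = M̄ᵀ - d_{π°,i}ᵀ ≤ M̄ᵀ`. An emphasized state can therefore not lead to an
unemphasized one under `P^λ`, and `C` only sees the block of `𝒥₁`. On that block,
`2 xᵀ M̂ (1 - Q̂) x` is a sum of nonnegative terms, one of them `∑ M̄_i Q̂_ij (x_i - x_j)²`; if it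
vanished, `Q̂` would be stochastic on the support of `x`, contradicting invertibility of `1 - Q̂`.
-/

open Matrix
open scoped Classical

noncomputable section
namespace ETD13

def Pmat {N M : ℕ} (p : Fin N → Fin M → Fin N → ℝ) (pol : Fin N → Fin M → ℝ) :
    Matrix (Fin N) (Fin N) ℝ :=
  Matrix.of fun s s' => ∑ a, pol s a * p s a s'

def Plam {N M : ℕ} (p : Fin N → Fin M → Fin N → ℝ) (pol : Fin N → Fin M → ℝ)
    (γf lf : Fin N → ℝ) : Matrix (Fin N) (Fin N) ℝ :=
  1 - (1 - Pmat p pol * Matrix.diagonal γf * Matrix.diagonal lf)⁻¹ *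
      (1 - Pmat p pol * Matrix.diagonal γf)

def MbarDiag {N M : ℕ} (p : Fin N → Fin M → Fin N → ℝ) (pol : Fin N → Fin M → ℝ)
    (γf lf d iF : Fin N → ℝ) : Fin N → ℝ :=
  Matrix.vecMul (fun s => d s * iF s) (1 - Plam p pol γf lf)⁻¹

def Cmat {N M n : ℕ} (p : Fin N → Fin M → Fin N → ℝ) (pol : Fin N → Fin M → ℝ)
    (γf lf d iF : Fin N → ℝ) (Φ : Matrix (Fin N) (Fin n) ℝ) : Matrix (Fin n) (Fin n) ℝ :=
  -(Φᵀ * Matrix.diagonal (MbarDiag p pol γf lf d iF) * (1 - Plam p pol γf lf) * Φ)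

/-- The set 𝒥₁ of emphasized states, as a subtype. -/
def EmphIdx {N M : ℕ} (p : Fin N → Fin M → Fin N → ℝ) (pol : Fin N → Fin M → ℝ)
    (γf lf d iF : Fin N → ℝ) : Type :=
  {s : Fin N // 0 < MbarDiag p pol γf lf d iF s}

instance {N M : ℕ} (p : Fin N → Fin M → Fin N → ℝ) (pol : Fin N → Fin M → ℝ)
    (γf lf d iF : Fin N → ℝ) : Fintype (EmphIdx p pol γf lf d iF) :=
  Subtype.fintype _

instance {N M : ℕ} (p : Fin N → Fin M → Fin N → ℝ) (pol : Fin N → Fin M → ℝ)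
    (γf lf d iF : Fin N → ℝ) : DecidableEq (EmphIdx p pol γf lf d iF) :=
  fun x y => Classical.dec _

/-- Q̂ : the submatrix of P^λ_{π,γ} with row and column indices in 𝒥₁. -/
def Qhat {N M : ℕ} (p : Fin N → Fin M → Fin N → ℝ) (pol : Fin N → Fin M → ℝ)
    (γf lf d iF : Fin N → ℝ) :
    Matrix (EmphIdx p pol γf lf d iF) (EmphIdx p pol γf lf d iF) ℝ :=
  (Plam p pol γf lf).submatrix Subtype.val Subtype.val

/-- M̂ : the diagonal matrix with entries M̄_{ss}, s ∈ 𝒥₁. -/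
def Mhat {N M : ℕ} (p : Fin N → Fin M → Fin N → ℝ) (pol : Fin N → Fin M → ℝ)
    (γf lf d iF : Fin N → ℝ) :
    Matrix (EmphIdx p pol γf lf d iF) (EmphIdx p pol γf lf d iF) ℝ :=
  Matrix.diagonal (fun s => MbarDiag p pol γf lf d iF s.1)

/-- Φ₁ : the rows of Φ corresponding to emphasized states. -/
def Phi1 {N M n : ℕ} (p : Fin N → Fin M → Fin N → ℝ) (pol : Fin N → Fin M → ℝ)
    (γf lf d iF : Fin N → ℝ) (Φ : Matrix (Fin N) (Fin n) ℝ) :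
    Matrix (EmphIdx p pol γf lf d iF) (Fin n) ℝ :=
  Φ.submatrix Subtype.val id

end ETD13

namespace Matrix

variable {ι κ : Type*} [Fintype ι]

structure IsSubstochastic (B : Matrix ι ι ℝ) : Prop where
  nonneg : ∀ i j, 0 ≤ B i j
  sum_le_one : ∀ i, ∑ j, B i j ≤ 1

def IsStochasticOn (B : Matrix ι ι ℝ) (A : Finset ι) : Prop :=
  ∀ i ∈ A, ∑ j ∈ A, B i j = 1

theorem mul_diagonal_apply_nonneg [DecidableEq ι] {B : Matrix ι ι ℝ} (hB : ∀ i j, 0 ≤ B i j)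
    {γ : ι → ℝ} (hγ : ∀ j, 0 ≤ γ j) (i j : ι) : 0 ≤ (B * diagonal γ) i j := by
  rw [mul_diagonal]
  exact mul_nonneg (hB i j) (hγ j)

theorem mul_diagonal_apply_le [DecidableEq ι] {B : Matrix ι ι ℝ} (hB : ∀ i j, 0 ≤ B i j)
    {γ : ι → ℝ} (hγ : ∀ j, γ j ≤ 1) (i j : ι) : (B * diagonal γ) i j ≤ B i j := by
  rw [mul_diagonal]
  exact mul_le_of_le_one_right (hB i j) (hγ j)

theorem vecMul_apply_le_of_vecMul_one_sub_nonneg [DecidableEq ι] {B : Matrix ι ι ℝ}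
    {m : ι → ℝ} (h : ∀ j, 0 ≤ (m ᵥ* (1 - B)) j) (j : ι) : (m ᵥ* B) j ≤ m j := by
  have := h j
  rw [vecMul_sub, vecMul_one, Pi.sub_apply] at this
  linarith

theorem two_mul_dotProduct_diagonal_one_sub_mulVec [DecidableEq ι] (B : Matrix ι ι ℝ)
    (m x : ι → ℝ) :
    2 * (x ⬝ᵥ (diagonal m * (1 - B)) *ᵥ x) =
      ∑ i, m i * (1 - ∑ j, B i j) * x i ^ 2 + ∑ j, (m j - (m ᵥ* B) j) * x j ^ 2 +
        ∑ i, ∑ j, m i * B i j * (x i - x j) ^ 2 := by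
  have hform : x ⬝ᵥ (diagonal m * (1 - B)) *ᵥ x =
      ∑ i, m i * x i ^ 2 - ∑ i, ∑ j, m i * B i j * (x i * x j) := by
    rw [← mulVec_mulVec, sub_mulVec, one_mulVec]
    simp only [dotProduct, mulVec_diagonal, Pi.sub_apply]
    rw [← Finset.sum_sub_distrib]
    refine Finset.sum_congr rfl fun i _ => ?_
    rw [show (B *ᵥ x) i = ∑ j, B i j * x j from rfl, mul_sub, mul_sub, Finset.mul_sum,
      Finset.mul_sum]
    exact congrArg₂ _ (by ring) (Finset.sum_congr rfl fun j _ => by ring)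
  have hrow : ∑ i, m i * (1 - ∑ j, B i j) * x i ^ 2 =
      ∑ i, m i * x i ^ 2 - ∑ i, ∑ j, m i * B i j * x i ^ 2 := by
    rw [← Finset.sum_sub_distrib]
    refine Finset.sum_congr rfl fun i _ => ?_
    rw [mul_sub, mul_one, sub_mul, Finset.mul_sum, Finset.sum_mul]
  have hcol : ∑ j, (m j - (m ᵥ* B) j) * x j ^ 2 =
      ∑ j, m j * x j ^ 2 - ∑ i, ∑ j, m i * B i j * x j ^ 2 := by
    simp only [sub_mul, Finset.sum_sub_distrib, vecMul, dotProduct, Finset.sum_mul]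
    rw [Finset.sum_comm (f := fun j i => m i * B i j * x j ^ 2)]
  have hsq : ∑ i, ∑ j, m i * B i j * (x i - x j) ^ 2 =
      ∑ i, ∑ j, m i * B i j * x i ^ 2 - 2 * ∑ i, ∑ j, m i * B i j * (x i * x j) +
        ∑ i, ∑ j, m i * B i j * x j ^ 2 := by
    simp only [Finset.mul_sum, ← Finset.sum_sub_distrib, ← Finset.sum_add_distrib]
    exact Finset.sum_congr rfl fun i _ => Finset.sum_congr rfl fun j _ => by ring
  rw [hform, hrow, hcol, hsq]
  ring

theorem apply_eq_zero_of_vecMul_le {B : Matrix ι ι ℝ} (hB : ∀ i j, 0 ≤ B i j) {m : ι → ℝ}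
    (hm : ∀ i, 0 ≤ m i) (hexc : ∀ j, (m ᵥ* B) j ≤ m j) {i j : ι} (hi : 0 < m i)
    (hj : m j = 0) : B i j = 0 := by
  have hterm : ∀ k ∈ Finset.univ, 0 ≤ m k * B k j := fun k _ => mul_nonneg (hm k) (hB k j)
  have hsum : ∑ k, m k * B k j = 0 := le_antisymm (hj ▸ hexc j) (Finset.sum_nonneg hterm)
  exact (mul_eq_zero.mp ((Finset.sum_eq_zero_iff_of_nonneg hterm).mp hsum i
    (Finset.mem_univ i))).resolve_left hi.ne'

section Restriction

variable {R ν μ : Type*} [NonUnitalNonAssocSemiring R] [Fintype κ] {f : κ → ι}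

theorem comp_vecMul_submatrix (hf : Function.Injective f) {m : ι → R}
    (hm : ∀ i ∉ Set.range f, m i = 0) (B : Matrix ι ν R) (g : μ → ν) :
    (m ∘ f) ᵥ* B.submatrix f g = (m ᵥ* B) ∘ g :=
  funext fun _ => Fintype.sum_of_injective f hf _ _ (fun i hi => by simp [hm i hi]) fun _ => rfl

theorem transpose_mul_mul_eq_submatrix (hf : Function.Injective f) {G : Matrix ι ι R}
    (hG : ∀ i j, G i j ≠ 0 → i ∈ Set.range f ∧ j ∈ Set.range f) (Φ : Matrix ι ν R) :
    Φᵀ * G * Φ = (Φ.submatrix f id)ᵀ * G.submatrix f f * Φ.submatrix f id := by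
  ext a b
  simp only [mul_apply, transpose_apply, submatrix_apply, id]
  refine (Fintype.sum_of_injective f hf _ _ (fun j hj => ?_) fun l => ?_).symm
  · rw [Finset.sum_eq_zero fun i _ => ?_, zero_mul]
    by_contra h
    exact hj (hG i j (right_ne_zero_of_mul h)).2
  · refine congrArg (· * _) (Fintype.sum_of_injective f hf _ _ (fun i hi => ?_) fun _ => rfl)
    by_contra h
    exact hi (hG i (f l) (right_ne_zero_of_mul h)).1

end Restriction

namespace IsSubstochastic

variable {B : Matrix ι ι ℝ}

theorem apply_eq_zero_of_isStochasticOn (hB : B.IsSubstochastic) {A : Finset ι}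
    (hA : B.IsStochasticOn A) {i j : ι} (hi : i ∈ A) (hj : j ∉ A) : B i j = 0 := by
  have hsplit := Finset.sum_add_sum_compl A (B i)
  have hcompl : ∑ k ∈ Aᶜ, B i k = 0 :=
    le_antisymm (by linarith [hB.sum_le_one i, hA i hi])
      (Finset.sum_nonneg fun k _ => hB.nonneg i k)
  exact (Finset.sum_eq_zero_iff_of_nonneg fun k _ => hB.nonneg i k).mp hcompl j
    (Finset.mem_compl.mpr hj)

theorem det_one_sub_eq_zero [DecidableEq ι] (hB : B.IsSubstochastic) {A : Finset ι}
    (hne : A.Nonempty) (hA : B.IsStochasticOn A) : (1 - B).det = 0 := by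
  rw [twoBlockTriangular_det' (1 - B) (· ∈ A) fun i hi j hj => by
    simp [sub_apply, one_apply_ne (ne_of_mem_of_not_mem hi hj),
      hB.apply_eq_zero_of_isStochasticOn hA hi hj]]
  obtain ⟨a, ha⟩ := hne
  refine mul_eq_zero_of_left ?_ _
  -- the all-ones vector is in the kernel of the `A`-block
  rw [← @exists_mulVec_eq_zero_iff _ (Subtype.fintype _)]
  refine ⟨fun _ => 1, fun h => one_ne_zero (congrFun h ⟨a, ha⟩), ?_⟩
  ext ⟨i, hi⟩
  simp only [mulVec, dotProduct, toSquareBlockProp, toBlock_apply, mul_one, Pi.zero_apply]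
  rw [← Finset.sum_subtype A (fun _ => Iff.rfl) ((1 - B) i)]
  simp only [sub_apply, Finset.sum_sub_distrib, hA i hi]
  simp [one_apply, hi]

theorem exists_isStochasticOn_of_le_mulVec (hB : B.IsSubstochastic) {w : ι → ℝ}
    (hw : ∀ i, w i ≤ (B *ᵥ w) i) {k : ι} (hk : 0 < w k) :
    ∃ A : Finset ι, A.Nonempty ∧ B.IsStochasticOn A := by
  obtain ⟨i₀, -, hmax⟩ := Finset.univ.exists_max_image w ⟨k, Finset.mem_univ k⟩
  set c := w i₀
  have hc : 0 < c := hk.trans_le (hmax k (Finset.mem_univ k))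
  refine ⟨Finset.univ.filter (w · = c), ⟨i₀, by simp [c]⟩, fun i hi => ?_⟩
  have hwi : w i = c := (Finset.mem_filter.mp hi).2
  -- `w i ≤ (B *ᵥ w) i` says that these two nonnegative quantities have sum `≤ 0`
  have hdefect : (1 - ∑ j, B i j) * c + ∑ j, B i j * (c - w j) ≤ 0 := by
    have hsplit : ∑ j, B i j * (c - w j) = (∑ j, B i j) * c - ∑ j, B i j * w j := by
      rw [Finset.sum_mul, ← Finset.sum_sub_distrib]
      exact Finset.sum_congr rfl fun j _ => by ring
    have := hw i
    simp only [mulVec, dotProduct] at this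
    linarith
  have hterm : ∀ j ∈ Finset.univ, 0 ≤ B i j * (c - w j) := fun j _ =>
    mul_nonneg (hB.nonneg i j) (sub_nonneg.mpr (hmax j (Finset.mem_univ j)))
  have hlost : 0 ≤ (1 - ∑ j, B i j) * c := mul_nonneg (by linarith [hB.sum_le_one i]) hc.le
  have hsum := Finset.sum_nonneg hterm
  have hrow : ∑ j, B i j = 1 := by
    have := (mul_eq_zero.mp (show (1 - ∑ j, B i j) * c = 0 by linarith)).resolve_right hc.ne'
    linarith
  have hzero := (Finset.sum_eq_zero_iff_of_nonneg hterm).mp (by linarith)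
  have hsupp : ∀ j ∈ Finset.univ, B i j ≠ 0 → w j = c := fun j _ hBij => by
    by_contra hj
    exact hBij ((mul_eq_zero.mp (hzero j (Finset.mem_univ j))).resolve_right
      (sub_ne_zero.mpr (Ne.symm hj)))
  rw [Finset.sum_filter_of_ne hsupp, hrow]

theorem isUnit_one_sub_iff [DecidableEq ι] (hB : B.IsSubstochastic) :
    IsUnit (1 - B) ↔ ∀ A : Finset ι, A.Nonempty → ¬ B.IsStochasticOn A := by
  rw [isUnit_iff_isUnit_det, isUnit_iff_ne_zero]
  refine ⟨fun hdet A hne hA => hdet (hB.det_one_sub_eq_zero hne hA), fun h hdet => ?_⟩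
  obtain ⟨v, hv0, hv⟩ := exists_mulVec_eq_zero_iff.mpr hdet
  obtain ⟨k, hk⟩ := Function.ne_iff.mp hv0
  rw [sub_mulVec, one_mulVec, sub_eq_zero] at hv
  have hw : ∀ i, |v i| ≤ (B *ᵥ fun j => |v j|) i := fun i => calc
    |v i| = |(B *ᵥ v) i| := by rw [← hv]
    _ = |∑ j, B i j * v j| := rfl
    _ ≤ ∑ j, |B i j * v j| := Finset.abs_sum_le_sum_abs _ _
    _ = (B *ᵥ fun j => |v j|) i := by
      simp [mulVec, dotProduct, abs_mul, abs_of_nonneg (hB.nonneg i _)]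
  obtain ⟨A, hne, hA⟩ := hB.exists_isStochasticOn_of_le_mulVec hw (abs_pos.mpr hk)
  exact h A hne hA

theorem nonneg_of_one_sub_mulVec_nonneg [DecidableEq ι] (hB : B.IsSubstochastic)
    (hu : IsUnit (1 - B)) {x : ι → ℝ} (hx : ∀ i, 0 ≤ ((1 - B) *ᵥ x) i) (i : ι) : 0 ≤ x i := by
  by_contra! hneg
  have hw : ∀ j, (-x) j ≤ (B *ᵥ -x) j := fun j => by
    have := hx j
    simp only [sub_mulVec, one_mulVec, Pi.sub_apply, mulVec_neg, Pi.neg_apply] at this ⊢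
    linarith
  obtain ⟨A, hne, hA⟩ := hB.exists_isStochasticOn_of_le_mulVec hw (neg_pos.mpr hneg)
  exact hB.isUnit_one_sub_iff.mp hu A hne hA

theorem inv_one_sub_nonneg [DecidableEq ι] (hB : B.IsSubstochastic) (hu : IsUnit (1 - B))
    (i j : ι) : 0 ≤ (1 - B)⁻¹ i j := by
  have hcol : (1 - B) *ᵥ ((1 - B)⁻¹ *ᵥ Pi.single j 1) = Pi.single j 1 := by
    rw [mulVec_mulVec, mul_nonsing_inv _ ((isUnit_iff_isUnit_det _).mp hu), one_mulVec]
  have := hB.nonneg_of_one_sub_mulVec_nonneg hu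
    (fun k => by rw [hcol, Pi.single_apply]; split_ifs <;> norm_num) i
  rwa [mulVec_single_one] at this

theorem of_le (hB : B.IsSubstochastic) {B' : Matrix ι ι ℝ} (h0 : ∀ i j, 0 ≤ B' i j)
    (hle : ∀ i j, B' i j ≤ B i j) : B'.IsSubstochastic :=
  ⟨h0, fun i => (Finset.sum_le_sum fun j _ => hle i j).trans (hB.sum_le_one i)⟩

theorem mul_diagonal [DecidableEq ι] (hB : B.IsSubstochastic) {γ : ι → ℝ}
    (hγ : ∀ j, 0 ≤ γ j ∧ γ j ≤ 1) : (B * diagonal γ).IsSubstochastic :=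
  hB.of_le (mul_diagonal_apply_nonneg hB.nonneg fun j => (hγ j).1)
    (mul_diagonal_apply_le hB.nonneg fun j => (hγ j).2)

theorem isUnit_one_sub_of_le [DecidableEq ι] (hB : B.IsSubstochastic) (hu : IsUnit (1 - B))
    {B' : Matrix ι ι ℝ} (h0 : ∀ i j, 0 ≤ B' i j) (hle : ∀ i j, B' i j ≤ B i j) :
    IsUnit (1 - B') := by
  refine (hB.of_le h0 hle).isUnit_one_sub_iff.mpr fun A hne hA =>
    hB.isUnit_one_sub_iff.mp hu A hne fun i hi => le_antisymm ?_ ?_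
  · exact (Finset.sum_le_sum_of_subset_of_nonneg (Finset.subset_univ A)
      fun j _ _ => hB.nonneg i j).trans (hB.sum_le_one i)
  · exact (hA i hi).symm.le.trans (Finset.sum_le_sum fun j _ => hle i j)

theorem one_sub_inv_mul_one_sub [DecidableEq ι] (hB : B.IsSubstochastic) {B' : Matrix ι ι ℝ}
    (h0 : ∀ i j, 0 ≤ B' i j) (hle : ∀ i j, B' i j ≤ B i j) (hu : IsUnit (1 - B')) :
    (1 - (1 - B')⁻¹ * (1 - B)).IsSubstochastic := by
  have hN := (hB.of_le h0 hle).inv_one_sub_nonneg hu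
  have heq : 1 - (1 - B')⁻¹ * (1 - B) = (1 - B')⁻¹ * (B - B') := by
    rw [show B - B' = (1 - B') - (1 - B) by abel, Matrix.mul_sub (1 - B')⁻¹ (1 - B'),
      nonsing_inv_mul _ ((isUnit_iff_isUnit_det _).mp hu)]
  have hrow : ∀ i, 0 ≤ ∑ j, ((1 - B')⁻¹ * (1 - B)) i j := fun i => by
    simp only [mul_apply]
    rw [Finset.sum_comm]
    refine Finset.sum_nonneg fun k _ => ?_
    rw [← Finset.mul_sum]
    refine mul_nonneg (hN i k) ?_
    simp [sub_apply, Finset.sum_sub_distrib, one_apply, hB.sum_le_one k]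
  refine ⟨fun i j => ?_, fun i => ?_⟩
  · rw [heq, mul_apply]
    exact Finset.sum_nonneg fun k _ => mul_nonneg (hN i k) (sub_nonneg.mpr (hle k j))
  · simp only [sub_apply, Finset.sum_sub_distrib, one_apply, Finset.sum_ite_eq, Finset.mem_univ,
      if_true]
    linarith [hrow i]

theorem submatrix [Fintype κ] (hB : B.IsSubstochastic) {f : κ → ι} (hf : Function.Injective f) :
    (B.submatrix f f).IsSubstochastic :=
  ⟨fun _ _ => hB.nonneg _ _, fun i => calc
    ∑ j, B (f i) (f j) = ∑ j ∈ Finset.univ.map ⟨f, hf⟩, B (f i) j := by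
      rw [Finset.sum_map]; rfl
    _ ≤ ∑ j, B (f i) j := Finset.sum_le_sum_of_subset_of_nonneg (Finset.subset_univ _)
      fun j _ _ => hB.nonneg _ j
    _ ≤ 1 := hB.sum_le_one _⟩

theorem isUnit_one_sub_submatrix [DecidableEq ι] [Fintype κ] [DecidableEq κ]
    (hB : B.IsSubstochastic) (hu : IsUnit (1 - B)) {f : κ → ι} (hf : Function.Injective f) :
    IsUnit (1 - B.submatrix f f) :=
  (hB.submatrix hf).isUnit_one_sub_iff.mpr fun A hne hA =>
    hB.isUnit_one_sub_iff.mp hu (A.map ⟨f, hf⟩) hne.map fun i hi => by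
      obtain ⟨k, hk, rfl⟩ := Finset.mem_map.mp hi
      rw [Finset.sum_map]
      exact hA k hk

theorem dotProduct_diagonal_one_sub_mulVec_pos [DecidableEq ι]
    (hB : B.IsSubstochastic) (hu : IsUnit (1 - B)) {m : ι → ℝ}
    (hm : ∀ i, 0 < m i) (hexc : ∀ j, (m ᵥ* B) j ≤ m j) {x : ι → ℝ} (hx : x ≠ 0) :
    0 < x ⬝ᵥ (diagonal m * (1 - B)) *ᵥ x := by
  have hrow : ∀ i ∈ Finset.univ, 0 ≤ m i * (1 - ∑ j, B i j) * x i ^ 2 := fun i _ =>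
    mul_nonneg (mul_nonneg (hm i).le (sub_nonneg.mpr (hB.sum_le_one i))) (sq_nonneg _)
  have hcol : ∀ j ∈ Finset.univ, 0 ≤ (m j - (m ᵥ* B) j) * x j ^ 2 := fun j _ =>
    mul_nonneg (sub_nonneg.mpr (hexc j)) (sq_nonneg _)
  have hsq : ∀ i ∈ Finset.univ, ∀ j ∈ Finset.univ, 0 ≤ m i * B i j * (x i - x j) ^ 2 :=
    fun i _ j _ => mul_nonneg (mul_nonneg (hm i).le (hB.nonneg i j)) (sq_nonneg _)
  by_contra! hle
  have hsum := two_mul_dotProduct_diagonal_one_sub_mulVec B m x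
  have hrow0 := (Finset.sum_eq_zero_iff_of_nonneg hrow).mp <| by
    linarith [Finset.sum_nonneg hrow, Finset.sum_nonneg hcol,
      Finset.sum_nonneg fun i hi => Finset.sum_nonneg (hsq i hi)]
  have hsq0 := (Finset.sum_eq_zero_iff_of_nonneg fun i hi => Finset.sum_nonneg (hsq i hi)).mp <| by
    linarith [Finset.sum_nonneg hrow, Finset.sum_nonneg hcol,
      Finset.sum_nonneg fun i hi => Finset.sum_nonneg (hsq i hi)]
  -- the support of `x` is then a set on which `B` is stochastic
  obtain ⟨k, hk⟩ := Function.ne_iff.mp hx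
  refine hB.isUnit_one_sub_iff.mp hu (Finset.univ.filter (x · ≠ 0)) ⟨k, by simpa using hk⟩
    fun i hi => ?_
  have hxi : x i ≠ 0 := (Finset.mem_filter.mp hi).2
  have hpos : 0 < m i * x i ^ 2 := mul_pos (hm i) (by positivity)
  have hrowi : ∑ j, B i j = 1 := by
    have h0 : (1 - ∑ j, B i j) * (m i * x i ^ 2) = 0 := by
      rw [← hrow0 i (Finset.mem_univ i)]; ring
    linarith [(mul_eq_zero.mp h0).resolve_right hpos.ne']
  have hsupp : ∀ j ∈ Finset.univ, B i j ≠ 0 → x j ≠ 0 := fun j _ hBij hxj => by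
    have h0 : B i j * (m i * x i ^ 2) = 0 := by
      rw [← (Finset.sum_eq_zero_iff_of_nonneg (hsq i (Finset.mem_univ i))).mp
        (hsq0 i (Finset.mem_univ i)) j (Finset.mem_univ j), hxj]
      ring
    exact hBij ((mul_eq_zero.mp h0).resolve_right hpos.ne')
  rw [Finset.sum_filter_of_ne hsupp, hrowi]

end IsSubstochastic

end Matrix

namespace ETD13

variable {N M n : ℕ} {p : Fin N → Fin M → Fin N → ℝ} {π : Fin N → Fin M → ℝ}
  {γf lf d iF : Fin N → ℝ}

theorem isSubstochastic_Pmat (hp0 : ∀ s a s', 0 ≤ p s a s') (hp1 : ∀ s a, ∑ s', p s a s' = 1)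
    (hπ0 : ∀ s a, 0 ≤ π s a) (hπ1 : ∀ s, ∑ a, π s a = 1) : (Pmat p π).IsSubstochastic := by
  refine ⟨fun s s' => ?_, fun s => le_of_eq ?_⟩
  · simp only [Pmat, of_apply]
    exact Finset.sum_nonneg fun a _ => mul_nonneg (hπ0 s a) (hp0 s a s')
  · simp only [Pmat, of_apply]
    rw [Finset.sum_comm]
    simp [← Finset.mul_sum, hp1, hπ1]

theorem isUnit_one_sub_Pmat_mul_diagonal_mul_diagonal (hP : (Pmat p π).IsSubstochastic)
    (hγ : ∀ s, 0 ≤ γf s ∧ γf s ≤ 1) (hlf : ∀ s, 0 ≤ lf s ∧ lf s ≤ 1)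
    (hA1i : IsUnit (1 - Pmat p π * diagonal γf)) :
    IsUnit (1 - Pmat p π * diagonal γf * diagonal lf) :=
  (hP.mul_diagonal hγ).isUnit_one_sub_of_le hA1i
    (mul_diagonal_apply_nonneg (hP.mul_diagonal hγ).nonneg fun s => (hlf s).1)
    (mul_diagonal_apply_le (hP.mul_diagonal hγ).nonneg fun s => (hlf s).2)

theorem isSubstochastic_Plam (hP : (Pmat p π).IsSubstochastic)
    (hγ : ∀ s, 0 ≤ γf s ∧ γf s ≤ 1) (hlf : ∀ s, 0 ≤ lf s ∧ lf s ≤ 1)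
    (hA1i : IsUnit (1 - Pmat p π * diagonal γf)) : (Plam p π γf lf).IsSubstochastic :=
  (hP.mul_diagonal hγ).one_sub_inv_mul_one_sub
    (mul_diagonal_apply_nonneg (hP.mul_diagonal hγ).nonneg fun s => (hlf s).1)
    (mul_diagonal_apply_le (hP.mul_diagonal hγ).nonneg fun s => (hlf s).2)
    (isUnit_one_sub_Pmat_mul_diagonal_mul_diagonal hP hγ hlf hA1i)

theorem isUnit_one_sub_Plam (hP : (Pmat p π).IsSubstochastic)
    (hγ : ∀ s, 0 ≤ γf s ∧ γf s ≤ 1) (hlf : ∀ s, 0 ≤ lf s ∧ lf s ≤ 1)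
    (hA1i : IsUnit (1 - Pmat p π * diagonal γf)) : IsUnit (1 - Plam p π γf lf) := by
  rw [Plam, sub_sub_cancel]
  exact (isUnit_nonsing_inv_iff.mpr
    (isUnit_one_sub_Pmat_mul_diagonal_mul_diagonal hP hγ hlf hA1i)).mul hA1i

theorem MbarDiag_nonneg (hL : (Plam p π γf lf).IsSubstochastic)
    (hLu : IsUnit (1 - Plam p π γf lf)) (hdi : ∀ s, 0 ≤ d s * iF s) (s : Fin N) :
    0 ≤ MbarDiag p π γf lf d iF s := by
  simp only [MbarDiag, vecMul, dotProduct]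
  exact Finset.sum_nonneg fun t _ => mul_nonneg (hdi t) (hL.inv_one_sub_nonneg hLu t s)

theorem MbarDiag_vecMul_one_sub_Plam (hLu : IsUnit (1 - Plam p π γf lf)) :
    MbarDiag p π γf lf d iF ᵥ* (1 - Plam p π γf lf) = fun s => d s * iF s := by
  rw [MbarDiag, vecMul_vecMul, nonsing_inv_mul _ ((isUnit_iff_isUnit_det _).mp hLu), vecMul_one]

theorem MbarDiag_eq_zero_of_not_mem_range (hL : (Plam p π γf lf).IsSubstochastic)
    (hLu : IsUnit (1 - Plam p π γf lf)) (hdi : ∀ s, 0 ≤ d s * iF s) {s : Fin N}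
    (hs : s ∉ Set.range (Subtype.val : EmphIdx p π γf lf d iF → Fin N)) :
    MbarDiag p π γf lf d iF s = 0 :=
  le_antisymm (not_lt.mp fun h => hs ⟨⟨s, h⟩, rfl⟩) (MbarDiag_nonneg hL hLu hdi s)

theorem Plam_apply_eq_zero_of_MbarDiag (hL : (Plam p π γf lf).IsSubstochastic)
    (hLu : IsUnit (1 - Plam p π γf lf)) (hdi : ∀ s, 0 ≤ d s * iF s) {i j : Fin N}
    (hi : 0 < MbarDiag p π γf lf d iF i) (hj : MbarDiag p π γf lf d iF j = 0) :
    Plam p π γf lf i j = 0 :=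
  apply_eq_zero_of_vecMul_le hL.nonneg (MbarDiag_nonneg hL hLu hdi)
    (vecMul_apply_le_of_vecMul_one_sub_nonneg fun s => by
      rw [MbarDiag_vecMul_one_sub_Plam hLu]; exact hdi s) hi hj

theorem one_sub_Qhat :
    1 - Qhat p π γf lf d iF =
      (1 - Plam p π γf lf).submatrix (Subtype.val : EmphIdx p π γf lf d iF → Fin N)
        (Subtype.val : EmphIdx p π γf lf d iF → Fin N) := by
  refine Matrix.ext fun (s t : EmphIdx p π γf lf d iF) => ?_
  show (1 : Matrix _ _ ℝ) s t - Plam p π γf lf s.1 t.1 =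
    (1 : Matrix (Fin N) (Fin N) ℝ) s.1 t.1 - Plam p π γf lf s.1 t.1
  by_cases h : s = t
  · rw [h, one_apply_eq, one_apply_eq]
  · rw [one_apply_ne h, one_apply_ne (Subtype.val_injective.ne h)]

theorem Mhat_mul_one_sub_Qhat :
    Mhat p π γf lf d iF * (1 - Qhat p π γf lf d iF) =
      (diagonal (MbarDiag p π γf lf d iF) * (1 - Plam p π γf lf)).submatrix
        (Subtype.val : EmphIdx p π γf lf d iF → Fin N)
        (Subtype.val : EmphIdx p π γf lf d iF → Fin N) := by
  rw [one_sub_Qhat]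
  exact Matrix.ext fun s t => (diagonal_mul _ _ _ _).trans
    (diagonal_mul (MbarDiag p π γf lf d iF) (1 - Plam p π γf lf) s.1 t.1).symm

theorem Cmat_eq (hL : (Plam p π γf lf).IsSubstochastic) (hLu : IsUnit (1 - Plam p π γf lf))
    (hdi : ∀ s, 0 ≤ d s * iF s) (Φ : Matrix (Fin N) (Fin n) ℝ) :
    Cmat p π γf lf d iF Φ =
      -((Phi1 p π γf lf d iF Φ)ᵀ * (Mhat p π γf lf d iF * (1 - Qhat p π γf lf d iF)) *
        Phi1 p π γf lf d iF Φ) := by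
  have hG : ∀ i j, (diagonal (MbarDiag p π γf lf d iF) * (1 - Plam p π γf lf)) i j ≠ 0 →
      i ∈ Set.range (Subtype.val : EmphIdx p π γf lf d iF → Fin N) ∧
        j ∈ Set.range (Subtype.val : EmphIdx p π γf lf d iF → Fin N) := by
    intro i j h
    rw [diagonal_mul] at h
    have hi := (MbarDiag_nonneg hL hLu hdi i).lt_of_ne' (left_ne_zero_of_mul h)
    refine ⟨⟨⟨i, hi⟩, rfl⟩, by_contra fun hj => right_ne_zero_of_mul h ?_⟩
    have hij : i ≠ j := by rintro rfl; exact hj ⟨⟨i, hi⟩, rfl⟩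
    rw [Matrix.sub_apply, one_apply_ne hij, Plam_apply_eq_zero_of_MbarDiag hL hLu hdi hi
      (MbarDiag_eq_zero_of_not_mem_range hL hLu hdi hj), sub_zero]
  rw [Cmat, Matrix.mul_assoc Φᵀ, transpose_mul_mul_eq_submatrix Subtype.val_injective hG,
    Mhat_mul_one_sub_Qhat]
  rfl

theorem MbarDiag_val_vecMul_one_sub_Qhat (hL : (Plam p π γf lf).IsSubstochastic)
    (hLu : IsUnit (1 - Plam p π γf lf)) (hdi : ∀ s, 0 ≤ d s * iF s) :
    (fun s : EmphIdx p π γf lf d iF => MbarDiag p π γf lf d iF s.1) ᵥ*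
        (1 - Qhat p π γf lf d iF) =
      fun s : EmphIdx p π γf lf d iF => d s.1 * iF s.1 := by
  rw [one_sub_Qhat]
  exact (comp_vecMul_submatrix Subtype.val_injective
    (fun _ hs => MbarDiag_eq_zero_of_not_mem_range hL hLu hdi hs) _ _).trans
    (by rw [MbarDiag_vecMul_one_sub_Plam hLu]; rfl)

theorem structure_of_C_general
    {N M n : ℕ}
    (p : Fin N → Fin M → Fin N → ℝ) (π : Fin N → Fin M → ℝ)
    (γf lf iF d : Fin N → ℝ) (Φ : Matrix (Fin N) (Fin n) ℝ)
    (hp0 : ∀ s a s', 0 ≤ p s a s') (hp1 : ∀ s a, ∑ s', p s a s' = 1)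
    (hπ0 : ∀ s a, 0 ≤ π s a) (hπ1 : ∀ s, ∑ a, π s a = 1)
    (hγ : ∀ s, 0 ≤ γf s ∧ γf s ≤ 1)
    (hlf : ∀ s, 0 ≤ lf s ∧ lf s ≤ 1) (hi : ∀ s, 0 ≤ iF s)
    -- Assumption 1
    (hA1i : IsUnit (1 - Pmat p π * Matrix.diagonal γf))
    -- steady-state distribution of the behavior policy
    (hd0 : ∀ s, 0 < d s) :
    -- C = −Φ₁ᵀ Ĝ Φ₁, with Ĝ = M̂ (I − Q̂)
    Cmat p π γf lf d iF Φ =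
      -((Phi1 p π γf lf d iF Φ)ᵀ *
          (Mhat p π γf lf d iF * (1 - Qhat p π γf lf d iF)) * Phi1 p π γf lf d iF Φ) ∧
    -- Ĝ is positive definite
    (∀ x : EmphIdx p π γf lf d iF → ℝ, x ≠ 0 →
        0 < x ⬝ᵥ (Mhat p π γf lf d iF * (1 - Qhat p π γf lf d iF)).mulVec x) ∧
    -- diag(M̂) = (d¹_{π°,i})ᵀ (I − Q̂)⁻¹ with d¹_{π°,i}(s) = d_{π°}(s)·i(s), s ∈ 𝒥₁
    (∀ s : EmphIdx p π γf lf d iF,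
        MbarDiag p π γf lf d iF s.1 =
          Matrix.vecMul (fun s' : EmphIdx p π γf lf d iF => d s'.1 * iF s'.1)
            (1 - Qhat p π γf lf d iF)⁻¹ s) := by
  have hP := isSubstochastic_Pmat hp0 hp1 hπ0 hπ1
  have hL := isSubstochastic_Plam hP hγ hlf hA1i
  have hLu := isUnit_one_sub_Plam hP hγ hlf hA1i
  have hdi : ∀ s, 0 ≤ d s * iF s := fun s => mul_nonneg (hd0 s).le (hi s)
  have hQ : (Qhat p π γf lf d iF).IsSubstochastic := hL.submatrix Subtype.val_injective
  have hQu : IsUnit (1 - Qhat p π γf lf d iF) :=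
    hL.isUnit_one_sub_submatrix hLu Subtype.val_injective
  have hQm := MbarDiag_val_vecMul_one_sub_Qhat hL hLu hdi
  refine ⟨Cmat_eq hL hLu hdi Φ, fun x hx => ?_, fun s => ?_⟩
  · exact hQ.dotProduct_diagonal_one_sub_mulVec_pos hQu (fun s => s.2)
      (vecMul_apply_le_of_vecMul_one_sub_nonneg fun s => by rw [hQm]; exact hdi s.1) hx
  · rw [← hQm, vecMul_vecMul, mul_nonsing_inv _ ((isUnit_iff_isUnit_det _).mp hQu), vecMul_one]

theorem structure_of_C
    {N M n : ℕ}
    (p : Fin N → Fin M → Fin N → ℝ) (π πb : Fin N → Fin M → ℝ)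
    (γf lf iF d : Fin N → ℝ) (Φ : Matrix (Fin N) (Fin n) ℝ)
    (hp0 : ∀ s a s', 0 ≤ p s a s') (hp1 : ∀ s a, ∑ s', p s a s' = 1)
    (hπ0 : ∀ s a, 0 ≤ π s a) (hπ1 : ∀ s, ∑ a, π s a = 1)
    (hπb0 : ∀ s a, 0 ≤ πb s a) (hπb1 : ∀ s, ∑ a, πb s a = 1)
    (hγ : ∀ s, 0 ≤ γf s ∧ γf s ≤ 1) (hγ1 : ∃ s, γf s < 1)
    (hlf : ∀ s, 0 ≤ lf s ∧ lf s ≤ 1) (hi : ∀ s, 0 ≤ iF s)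
    -- Assumption 1
    (hA1i : IsUnit (1 - Pmat p π * Matrix.diagonal γf))
    (hirr : ∀ s s', ∃ k : ℕ, 1 ≤ k ∧ 0 < (Pmat p πb ^ k) s s')
    (hsupp : ∀ s a, 0 < π s a → 0 < πb s a)
    -- steady-state distribution of the behavior policy
    (hd0 : ∀ s, 0 < d s) (hd1 : ∑ s, d s = 1)
    (hdstat : ∀ s', ∑ s, d s * Pmat p πb s s' = d s')
    -- i(s) > 0 for at least one state
    (hipos : ∃ s, 0 < iF s) :
    -- C = −Φ₁ᵀ Ĝ Φ₁, with Ĝ = M̂ (I − Q̂)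
    Cmat p π γf lf d iF Φ =
      -((Phi1 p π γf lf d iF Φ)ᵀ *
          (Mhat p π γf lf d iF * (1 - Qhat p π γf lf d iF)) * Phi1 p π γf lf d iF Φ) ∧
    -- Ĝ is positive definite
    (∀ x : EmphIdx p π γf lf d iF → ℝ, x ≠ 0 →
        0 < x ⬝ᵥ (Mhat p π γf lf d iF * (1 - Qhat p π γf lf d iF)).mulVec x) ∧
    -- diag(M̂) = (d¹_{π°,i})ᵀ (I − Q̂)⁻¹ with d¹_{π°,i}(s) = d_{π°}(s)·i(s), s ∈ 𝒥₁
    (∀ s : EmphIdx p π γf lf d iF,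
        MbarDiag p π γf lf d iF s.1 =
          Matrix.vecMul (fun s' : EmphIdx p π γf lf d iF => d s'.1 * iF s'.1)
            (1 - Qhat p π γf lf d iF)⁻¹ s) :=
  structure_of_C_general p π γf lf iF d Φ hp0 hp1 hπ0 hπ1 hγ hlf hi hA1i hd0

end ETD13
end
end

section
/- Let Assumption 1 hold and suppose i(s) > 0 for at least one state s ∈ 𝒮. Then the matrix C satisfies: (i) range(C) = range(Cᵀ) = span{φ(s) : s ∈ 𝒥₁}; and (ii) there exists c > 0 such that xᵀCx ≤ −c|x|² for all x ∈ span{φ(s) : s ∈ 𝒥₁}. -/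
/-!
`P^λ` is entrywise nonnegative with row sums at most one, and `I - P^λ = (I - PΓΛ)⁻¹ (I - PΓ)`
is invertible. For such a matrix `T` a minimum principle holds: `(I - T) x ≥ 0` forces `x ≥ 0`,
because on the set where a negative minimum of `x` is attained `T` would be stochastic and closed,
which makes `I - T` singular. Hence the emphasis weights `m = d_i (I - P^λ)⁻¹` are nonnegative
and satisfy `m = d_i + m P^λ`. For `B = diag(m) (I - P^λ)` this balance gives
`2 yᵀ B y = ∑ₛ (mₛ (1 - ∑ₜ P^λₛₜ) + d_i(s)) yₛ² + ∑ₛ,ₜ mₛ P^λₛₜ (yₛ - yₜ)²`,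
so `B` is positive semidefinite, and `yᵀ B y = 0` forces `y = 0` on `𝒥₁`: the states of `𝒥₁`
where `y ≠ 0` would again form a closed class on which `P^λ` is stochastic. The rows and columns
of `B` outside `𝒥₁` vanish, so `C = -Φᵀ B Φ` and `Cᵀ` map into `span{φ(s) : s ∈ 𝒥₁}` and are
negative definite there, hence onto it; compactness of the unit sphere of the span gives `c`.
-/

open Matrix
open scoped Classical

noncomputable section
namespace ETD14

def Pmat {N M : ℕ} (p : Fin N → Fin M → Fin N → ℝ) (pol : Fin N → Fin M → ℝ) :
    Matrix (Fin N) (Fin N) ℝ :=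
  Matrix.of fun s s' => ∑ a, pol s a * p s a s'

def Plam {N M : ℕ} (p : Fin N → Fin M → Fin N → ℝ) (pol : Fin N → Fin M → ℝ)
    (γf lf : Fin N → ℝ) : Matrix (Fin N) (Fin N) ℝ :=
  1 - (1 - Pmat p pol * Matrix.diagonal γf * Matrix.diagonal lf)⁻¹ *
      (1 - Pmat p pol * Matrix.diagonal γf)

def MbarDiag {N M : ℕ} (p : Fin N → Fin M → Fin N → ℝ) (pol : Fin N → Fin M → ℝ)
    (γf lf d iF : Fin N → ℝ) : Fin N → ℝ :=
  Matrix.vecMul (fun s => d s * iF s) (1 - Plam p pol γf lf)⁻¹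

def Cmat {N M n : ℕ} (p : Fin N → Fin M → Fin N → ℝ) (pol : Fin N → Fin M → ℝ)
    (γf lf d iF : Fin N → ℝ) (Φ : Matrix (Fin N) (Fin n) ℝ) : Matrix (Fin n) (Fin n) ℝ :=
  -(Φᵀ * Matrix.diagonal (MbarDiag p pol γf lf d iF) * (1 - Plam p pol γf lf) * Φ)

open Finset

section Substochastic

variable {ι : Type*} [Fintype ι] [DecidableEq ι]

theorem not_isUnit_one_sub_of_stochastic_on (T : Matrix ι ι ℝ) {U : Finset ι} (hU : U.Nonempty)
    (hclosed : ∀ s ∈ U, ∀ t ∉ U, T s t = 0) (hrow : ∀ s ∈ U, ∑ t, T s t = 1) :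
    ¬IsUnit (1 - T) := by
  -- `1 - T` is block triangular, and its block on `U` annihilates the constant vector.
  have hblock : ∀ i, ¬(i ∉ U) → ∀ j, j ∉ U → (1 - T) i j = 0 := fun i hi j hj => by
    have hij : i ≠ j := by rintro rfl; exact hi hj
    simp [one_apply_ne hij, hclosed i (not_not.mp hi) j hj]
  have hdet : ((1 - T).toSquareBlockProp fun i => ¬(i ∉ U)).det = 0 := by
    obtain ⟨s₀, hs₀⟩ := hU
    refine exists_mulVec_eq_zero_iff.mp ⟨fun _ => 1, fun h => ?_, ?_⟩
    · simpa using congrFun h ⟨s₀, not_not.mpr hs₀⟩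
    · ext s
      have hs : (s : ι) ∈ U := not_not.mp s.2
      have hsum : ∑ t : {a // ¬(a ∉ U)}, T s t = 1 := by
        rw [← hrow s hs, ← sum_subset (subset_univ U) fun t _ ht => hclosed s hs t ht]
        exact (sum_subtype U (fun t => not_not.symm) (T s)).symm
      have hone : ∀ t : {a // ¬(a ∉ U)}, (1 : Matrix ι ι ℝ) s t = (1 : Matrix _ _ ℝ) s t :=
        fun t => by simp only [one_apply, Subtype.ext_iff]
      simp [toSquareBlockProp, toBlock, mulVec, dotProduct, Matrix.sub_apply, hone,
        sum_sub_distrib, hsum, one_apply]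
  rw [isUnit_iff_isUnit_det, twoBlockTriangular_det _ _ hblock, hdet, mul_zero]
  exact not_isUnit_zero

theorem nonneg_of_one_sub_mulVec_nonneg (T : Matrix ι ι ℝ) (hT0 : ∀ s t, 0 ≤ T s t)
    (hTrow : ∀ s, ∑ t, T s t ≤ 1) (hT : IsUnit (1 - T)) {x : ι → ℝ}
    (hx : 0 ≤ (1 - T) *ᵥ x) : 0 ≤ x := by
  by_contra hneg
  obtain ⟨s₁, hs₁⟩ : ∃ s, x s < 0 := by simpa [Pi.le_def] using hneg
  have : Nonempty ι := ⟨s₁⟩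
  obtain ⟨s₀, hmin⟩ := Finite.exists_min x
  set μ := x s₀
  have hμ : μ < 0 := (hmin s₁).trans_lt hs₁
  set U := univ.filter (x · = μ)
  have hU : ∀ s ∈ U, ∑ t, T s t = 1 ∧ ∑ t, T s t * (x t - μ) = 0 := by
    intro s hs
    have hxs : x s = μ := (mem_filter.mp hs).2
    have hb : ∑ t, T s t * x t ≤ x s := by
      have h := hx s
      rw [sub_mulVec, one_mulVec] at h
      simpa [mulVec, dotProduct] using h
    have hgap : 0 ≤ ∑ t, T s t * (x t - μ) :=
      sum_nonneg fun t _ => mul_nonneg (hT0 s t) (sub_nonneg.2 (hmin t))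
    have hsplit : ∑ t, T s t * (x t - μ) = ∑ t, T s t * x t - (∑ t, T s t) * μ := by
      simp only [mul_sub, sum_sub_distrib, sum_mul]
    constructor <;> nlinarith [hTrow s]
  refine not_isUnit_one_sub_of_stochastic_on T ⟨s₀, by simp [U, μ]⟩ (fun s hs t ht => ?_)
    (fun s hs => (hU s hs).1) hT
  have hterm := (sum_eq_zero_iff_of_nonneg fun t _ =>
    mul_nonneg (hT0 s t) (sub_nonneg.2 (hmin t))).mp (hU s hs).2 t (mem_univ t)
  have hxt : x t - μ ≠ 0 := sub_ne_zero.mpr fun h => ht (by simp [U, h])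
  exact (mul_eq_zero.mp hterm).resolve_right hxt

theorem inv_one_sub_nonneg (T : Matrix ι ι ℝ) (hT0 : ∀ s t, 0 ≤ T s t)
    (hTrow : ∀ s, ∑ t, T s t ≤ 1) (hT : IsUnit (1 - T)) (s t : ι) : 0 ≤ (1 - T)⁻¹ s t := by
  have hcol : (1 - T) *ᵥ (fun s => (1 - T)⁻¹ s t) = fun s => (1 : Matrix ι ι ℝ) s t := by
    ext s
    rw [← congrFun (congrFun (mul_nonsing_inv _ ((isUnit_iff_isUnit_det _).mp hT)) s) t]
    rfl
  have hpos : 0 ≤ (1 - T) *ᵥ (fun s => (1 - T)⁻¹ s t) := hcol ▸ fun s => zero_le_one_elem s t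
  exact nonneg_of_one_sub_mulVec_nonneg T hT0 hTrow hT hpos s

theorem isUnit_one_sub_of_le (T T' : Matrix ι ι ℝ) (hT'0 : ∀ s t, 0 ≤ T' s t)
    (hle : ∀ s t, T' s t ≤ T s t) (hTrow : ∀ s, ∑ t, T s t ≤ 1) (hT : IsUnit (1 - T)) :
    IsUnit (1 - T') := by
  rw [isUnit_iff_isUnit_det, isUnit_iff_ne_zero]
  intro hdet
  obtain ⟨v, hv0, hv⟩ := exists_mulVec_eq_zero_iff.mpr hdet
  have hfix : ∀ s, v s = ∑ t, T' s t * v t := fun s => by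
    have h := congrFun hv s
    rw [sub_mulVec, one_mulVec] at h
    simpa [mulVec, dotProduct, sub_eq_zero] using h
  -- `|v| ≤ T' |v| ≤ T |v|`, so the minimum principle for `T` forces `|v| ≤ 0`.
  have hsub : 0 ≤ (1 - T) *ᵥ (fun s => -|v s|) := fun s => by
    have habs : |v s| ≤ ∑ t, T s t * |v t| := calc
      |v s| ≤ ∑ t, |T' s t * v t| := hfix s ▸ abs_sum_le_sum_abs _ _
      _ = ∑ t, T' s t * |v t| := by simp [abs_mul, abs_of_nonneg (hT'0 s _)]
      _ ≤ ∑ t, T s t * |v t| :=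
        sum_le_sum fun t _ => mul_le_mul_of_nonneg_right (hle s t) (abs_nonneg _)
    rw [sub_mulVec, one_mulVec, Pi.sub_apply]
    simpa [mulVec, dotProduct] using habs
  have hT0 : ∀ s t, 0 ≤ T s t := fun s t => (hT'0 s t).trans (hle s t)
  refine hv0 (funext fun s => abs_eq_zero.mp ?_)
  exact le_antisymm (neg_nonneg.mp (nonneg_of_one_sub_mulVec_nonneg T hT0 hTrow hT hsub s))
    (abs_nonneg _)

theorem mul_diagonal_apply_nonneg {Q : Matrix ι ι ℝ} {γ : ι → ℝ} (hQ0 : ∀ s t, 0 ≤ Q s t)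
    (hγ0 : ∀ s, 0 ≤ γ s) (s t : ι) : 0 ≤ (Q * diagonal γ) s t := by
  rw [mul_diagonal]
  exact mul_nonneg (hQ0 s t) (hγ0 t)

theorem mul_diagonal_apply_le {Q : Matrix ι ι ℝ} {γ : ι → ℝ} (hQ0 : ∀ s t, 0 ≤ Q s t)
    (hγ1 : ∀ s, γ s ≤ 1) (s t : ι) : (Q * diagonal γ) s t ≤ Q s t := by
  rw [mul_diagonal]
  exact mul_le_of_le_one_right (hQ0 s t) (hγ1 t)

theorem isUnit_one_sub_mul_diagonal_mul_diagonal {P : Matrix ι ι ℝ} {γ l : ι → ℝ}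
    (hP0 : ∀ s t, 0 ≤ P s t) (hProw : ∀ s, ∑ t, P s t ≤ 1) (hγ : ∀ s, 0 ≤ γ s ∧ γ s ≤ 1)
    (hl : ∀ s, 0 ≤ l s ∧ l s ≤ 1) (hPγ : IsUnit (1 - P * diagonal γ)) :
    IsUnit (1 - P * diagonal γ * diagonal l) := by
  have hPγ0 := mul_diagonal_apply_nonneg hP0 fun s => (hγ s).1
  refine isUnit_one_sub_of_le _ _ (mul_diagonal_apply_nonneg hPγ0 fun s => (hl s).1)
    (mul_diagonal_apply_le hPγ0 fun s => (hl s).2) (fun s => ?_) hPγ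
  exact (sum_le_sum fun t _ => mul_diagonal_apply_le hP0 (fun s => (hγ s).2) s t).trans
    (hProw s)

theorem inv_one_sub_mul_diagonal_mul_diagonal_nonneg {P : Matrix ι ι ℝ} {γ l : ι → ℝ}
    (hP0 : ∀ s t, 0 ≤ P s t) (hProw : ∀ s, ∑ t, P s t ≤ 1) (hγ : ∀ s, 0 ≤ γ s ∧ γ s ≤ 1)
    (hl : ∀ s, 0 ≤ l s ∧ l s ≤ 1) (hPγ : IsUnit (1 - P * diagonal γ)) (s t : ι) :
    0 ≤ (1 - P * diagonal γ * diagonal l)⁻¹ s t := by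
  have hPγ0 := mul_diagonal_apply_nonneg hP0 fun s => (hγ s).1
  refine inv_one_sub_nonneg _ (mul_diagonal_apply_nonneg hPγ0 fun s => (hl s).1) (fun s => ?_)
    (isUnit_one_sub_mul_diagonal_mul_diagonal hP0 hProw hγ hl hPγ) s t
  exact (sum_le_sum fun t _ => (mul_diagonal_apply_le hPγ0 (fun s => (hl s).2) s t).trans
    (mul_diagonal_apply_le hP0 (fun s => (hγ s).2) s t)).trans (hProw s)

end Substochastic

section TransitionMatrices

variable {N M : ℕ} {p : Fin N → Fin M → Fin N → ℝ} {pol : Fin N → Fin M → ℝ}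

theorem Pmat_nonneg (hp0 : ∀ s a s', 0 ≤ p s a s') (hpol0 : ∀ s a, 0 ≤ pol s a) (s t : Fin N) :
    0 ≤ Pmat p pol s t := by
  simp only [Pmat, of_apply]
  exact sum_nonneg fun a _ => mul_nonneg (hpol0 s a) (hp0 s a t)

theorem sum_Pmat_row (hp1 : ∀ s a, ∑ s', p s a s' = 1) (hpol1 : ∀ s, ∑ a, pol s a = 1)
    (s : Fin N) : ∑ t, Pmat p pol s t = 1 := by
  simp only [Pmat, of_apply]
  rw [sum_comm]
  simp [← mul_sum, hp1, hpol1]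

variable {γf lf : Fin N → ℝ}

theorem one_sub_Plam : 1 - Plam p pol γf lf =
    (1 - Pmat p pol * diagonal γf * diagonal lf)⁻¹ * (1 - Pmat p pol * diagonal γf) :=
  sub_sub_cancel _ _

theorem Plam_nonneg (hP0 : ∀ s t, 0 ≤ Pmat p pol s t)
    (hProw : ∀ s, ∑ t, Pmat p pol s t ≤ 1) (hγ : ∀ s, 0 ≤ γf s ∧ γf s ≤ 1)
    (hlf : ∀ s, 0 ≤ lf s ∧ lf s ≤ 1) (hPγ : IsUnit (1 - Pmat p pol * diagonal γf))
    (s t : Fin N) : 0 ≤ Plam p pol γf lf s t := by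
  set W := 1 - Pmat p pol * diagonal γf * diagonal lf
  have hW := isUnit_one_sub_mul_diagonal_mul_diagonal hP0 hProw hγ hlf hPγ
  have hPlam : Plam p pol γf lf =
      W⁻¹ * (Pmat p pol * diagonal γf - Pmat p pol * diagonal γf * diagonal lf) := by
    have hE : Pmat p pol * diagonal γf - Pmat p pol * diagonal γf * diagonal lf =
        W - (1 - Pmat p pol * diagonal γf) := by
      simp only [W]; abel
    rw [hE, Matrix.mul_sub, nonsing_inv_mul _ ((isUnit_iff_isUnit_det _).mp hW)]
    rfl
  rw [hPlam, mul_apply]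
  refine sum_nonneg fun u _ => mul_nonneg
    (inv_one_sub_mul_diagonal_mul_diagonal_nonneg hP0 hProw hγ hlf hPγ s u) ?_
  simp only [Matrix.sub_apply, mul_diagonal]
  nlinarith [mul_nonneg (mul_nonneg (hP0 u t) (hγ t).1) (sub_nonneg.2 (hlf t).2)]

theorem sum_Plam_row_le_one (hP0 : ∀ s t, 0 ≤ Pmat p pol s t)
    (hProw : ∀ s, ∑ t, Pmat p pol s t ≤ 1) (hγ : ∀ s, 0 ≤ γf s ∧ γf s ≤ 1)
    (hlf : ∀ s, 0 ≤ lf s ∧ lf s ≤ 1) (hPγ : IsUnit (1 - Pmat p pol * diagonal γf))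
    (s : Fin N) : ∑ t, Plam p pol γf lf s t ≤ 1 := by
  have hrow : ∀ u, 0 ≤ ∑ t, (1 - Pmat p pol * diagonal γf) u t := fun u => by
    simp only [Matrix.sub_apply, sum_sub_distrib, one_apply, sum_ite_eq, mem_univ, if_true,
      sub_nonneg]
    exact (sum_le_sum fun t _ => mul_diagonal_apply_le hP0 (fun s => (hγ s).2) u t).trans
      (hProw u)
  have hK : 0 ≤ ∑ t, (1 - Plam p pol γf lf) s t := by
    simp only [one_sub_Plam, mul_apply]
    rw [sum_comm]
    refine sum_nonneg fun u _ => ?_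
    rw [← mul_sum]
    exact mul_nonneg (inv_one_sub_mul_diagonal_mul_diagonal_nonneg hP0 hProw hγ hlf hPγ s u)
      (hrow u)
  simp only [Matrix.sub_apply, sum_sub_distrib, one_apply, sum_ite_eq, mem_univ, if_true] at hK
  linarith

theorem isUnit_one_sub_Plam (hP0 : ∀ s t, 0 ≤ Pmat p pol s t)
    (hProw : ∀ s, ∑ t, Pmat p pol s t ≤ 1) (hγ : ∀ s, 0 ≤ γf s ∧ γf s ≤ 1)
    (hlf : ∀ s, 0 ≤ lf s ∧ lf s ≤ 1) (hPγ : IsUnit (1 - Pmat p pol * diagonal γf)) :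
    IsUnit (1 - Plam p pol γf lf) := by
  rw [one_sub_Plam]
  exact (isUnit_nonsing_inv_iff.mpr
    (isUnit_one_sub_mul_diagonal_mul_diagonal hP0 hProw hγ hlf hPγ)).mul hPγ

end TransitionMatrices

theorem exists_pos_mul_le_of_homogeneous {E : Type*} [NormedAddCommGroup E] [NormedSpace ℝ E]
    [FiniteDimensional ℝ E] {q r : E → ℝ} (hq : Continuous q) (hr : Continuous r)
    (hq2 : ∀ (a : ℝ) x, q (a • x) = a ^ 2 * q x) (hr2 : ∀ (a : ℝ) x, r (a • x) = a ^ 2 * r x)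
    (hpos : ∀ x ≠ 0, 0 < q x) : ∃ c > 0, ∀ x, c * r x ≤ q x := by
  have hq0 : q 0 = 0 := by simpa using hq2 0 0
  have hr0 : r 0 = 0 := by simpa using hr2 0 0
  rcases subsingleton_or_nontrivial E with hE | hE
  · exact ⟨1, one_pos, fun x => by simp [Subsingleton.elim x 0, hq0, hr0]⟩
  have hS := (NormedSpace.sphere_nonempty (E := E) (x := 0) (r := 1)).mpr zero_le_one
  obtain ⟨u₀, hu₀, hmin⟩ := (isCompact_sphere (0 : E) 1).exists_isMinOn hS hq.continuousOn
  obtain ⟨u₁, -, hmax⟩ := (isCompact_sphere (0 : E) 1).exists_isMaxOn hS hr.continuousOn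
  have ha : 0 < q u₀ := hpos u₀ (Metric.ne_of_mem_sphere hu₀ one_ne_zero)
  have hb : 0 < max (r u₁) 1 := lt_max_of_lt_right one_pos
  refine ⟨q u₀ / max (r u₁) 1, div_pos ha hb, fun x => ?_⟩
  rcases eq_or_ne x 0 with rfl | hx
  · simp [hq0, hr0]
  set u := ‖x‖⁻¹ • x
  have hu : u ∈ Metric.sphere (0 : E) 1 := by simp [u, norm_smul, hx]
  have hxu : x = ‖x‖ • u := by simp [u, smul_smul, hx]
  have hqx : q x = ‖x‖ ^ 2 * q u := by rw [← hq2, ← hxu]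
  have hrx : r x = ‖x‖ ^ 2 * r u := by rw [← hr2, ← hxu]
  have hqu : q u₀ ≤ q u := hmin hu
  have hru : r u ≤ max (r u₁) 1 := (hmax hu).trans (le_max_left _ _)
  have hx2 : 0 < ‖x‖ ^ 2 := by positivity
  calc q u₀ / max (r u₁) 1 * r x ≤ q u₀ / max (r u₁) 1 * (‖x‖ ^ 2 * max (r u₁) 1) := by
        rw [hrx]; gcongr
    _ = ‖x‖ ^ 2 * q u₀ := by field_simp
    _ ≤ q x := by rw [hqx]; gcongr

section Span

variable {ι κ : Type*}

theorem transpose_mulVec_mem_span [Fintype ι] {Φ : Matrix ι κ ℝ} {J : Set ι} {z : ι → ℝ}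
    (hz : ∀ s ∉ J, z s = 0) : Φᵀ *ᵥ z ∈ Submodule.span ℝ (Φ '' J) := by
  rw [mulVec_transpose, vecMul_eq_sum]
  refine Submodule.sum_mem _ fun s _ => ?_
  by_cases hs : s ∈ J
  · exact Submodule.smul_mem _ _ (Submodule.subset_span ⟨s, hs, rfl⟩)
  · simp [hz s hs]

theorem eq_zero_of_mem_span_of_mulVec_eq_zero [Fintype κ] {Φ : Matrix ι κ ℝ} {J : Set ι}
    {x : κ → ℝ} (hx : x ∈ Submodule.span ℝ (Φ '' J)) (hΦx : ∀ s ∈ J, (Φ *ᵥ x) s = 0) : x = 0 := by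
  have hperp : ∀ v ∈ Submodule.span ℝ (Φ '' J), v ⬝ᵥ x = 0 := fun v hv => by
    induction hv using Submodule.span_induction with
    | mem v hv => obtain ⟨s, hs, rfl⟩ := hv; exact hΦx s hs
    | zero => exact zero_dotProduct x
    | add v w _ _ hv hw => rw [add_dotProduct, hv, hw, add_zero]
    | smul a v _ hv => rw [smul_dotProduct, hv, smul_zero]
  exact dotProduct_self_eq_zero.mp (hperp x hx)

theorem range_mulVecLin_eq_of_injOn [Fintype κ] {D : Matrix κ κ ℝ} {V : Submodule ℝ (κ → ℝ)}
    (hmem : ∀ x, D *ᵥ x ∈ V) (hinj : ∀ x ∈ V, D *ᵥ x = 0 → x = 0) :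
    LinearMap.range D.mulVecLin = V := by
  refine le_antisymm (LinearMap.range_le_iff_comap.mpr (eq_top_iff.mpr fun x _ => hmem x))
    fun y hy => ?_
  let L : V →ₗ[ℝ] V := D.mulVecLin.restrict fun x _ => hmem x
  have hL : Function.Injective L := by
    rw [← LinearMap.ker_eq_bot, LinearMap.ker_eq_bot']
    exact fun z hz => Subtype.ext (hinj z z.2 (congrArg Subtype.val hz))
  obtain ⟨z, hz⟩ := LinearMap.injective_iff_surjective.mp hL ⟨y, hy⟩
  exact ⟨z, congrArg Subtype.val hz⟩

theorem range_eq_span_and_neg_definite [Fintype ι] [Fintype κ] (Φ : Matrix ι κ ℝ)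
    {B : Matrix ι ι ℝ} {J : Set ι} (hrow : ∀ s ∉ J, ∀ t, B s t = 0)
    (hnonneg : ∀ y, 0 ≤ y ⬝ᵥ B *ᵥ y) (hnull : ∀ y, y ⬝ᵥ B *ᵥ y = 0 → ∀ s ∈ J, y s = 0) :
    LinearMap.range (-(Φᵀ * B * Φ)).mulVecLin = Submodule.span ℝ (Φ '' J) ∧
      ∃ c > 0, ∀ x ∈ Submodule.span ℝ (Φ '' J),
        x ⬝ᵥ (-(Φᵀ * B * Φ)) *ᵥ x ≤ -c * (x ⬝ᵥ x) := by
  set V := Submodule.span ℝ (Φ '' J)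
  have hmulVec : ∀ x, (-(Φᵀ * B * Φ)) *ᵥ x = Φᵀ *ᵥ -(B *ᵥ (Φ *ᵥ x)) := fun x => by
    simp only [neg_mulVec, mulVec_neg, mulVec_mulVec, Matrix.mul_assoc]
  have hquad : ∀ x, x ⬝ᵥ (-(Φᵀ * B * Φ)) *ᵥ x = -((Φ *ᵥ x) ⬝ᵥ B *ᵥ (Φ *ᵥ x)) := fun x => by
    rw [hmulVec, mulVec_neg, dotProduct_neg, dotProduct_mulVec, vecMul_transpose]
  have hpos : ∀ x ∈ V, x ≠ 0 → 0 < (Φ *ᵥ x) ⬝ᵥ B *ᵥ (Φ *ᵥ x) := fun x hx hx0 =>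
    (hnonneg _).lt_of_ne fun h =>
      hx0 (eq_zero_of_mem_span_of_mulVec_eq_zero hx (hnull _ h.symm))
  refine ⟨range_mulVecLin_eq_of_injOn (fun x => ?_) (fun x hx hx0 => ?_), ?_⟩
  · rw [hmulVec]
    exact transpose_mulVec_mem_span fun s hs => by
      simp [mulVec, dotProduct, hrow s hs, -mulVec_mulVec]
  · by_contra hne
    have h := hquad x
    rw [hx0, dotProduct_zero] at h
    linarith [hpos x hx hne]
  · obtain ⟨c, hc, hle⟩ := exists_pos_mul_le_of_homogeneous
      (q := fun x : V => (Φ *ᵥ (x : κ → ℝ)) ⬝ᵥ B *ᵥ (Φ *ᵥ (x : κ → ℝ)))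
      (r := fun x : V => (x : κ → ℝ) ⬝ᵥ (x : κ → ℝ)) (by fun_prop) (by fun_prop)
      (fun a x => by simp [mulVec_smul, dotProduct_smul, smul_dotProduct]; ring)
      (fun a x => by simp [dotProduct_smul, smul_dotProduct]; ring)
      (fun x hx => hpos x x.2 (by simpa using hx))
    exact ⟨c, hc, fun x hx => by linarith [hquad x, hle ⟨x, hx⟩]⟩

end Span

section Emphasis

variable {ι κ : Type*} [Fintype ι] [DecidableEq ι] [Fintype κ]

theorem vecMul_inv_one_sub_nonneg {P : Matrix ι ι ℝ} (hP0 : ∀ s t, 0 ≤ P s t)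
    (hProw : ∀ s, ∑ t, P s t ≤ 1) (hP : IsUnit (1 - P)) {dI : ι → ℝ} (hdI : ∀ s, 0 ≤ dI s)
    (s : ι) : 0 ≤ (dI ᵥ* (1 - P)⁻¹) s :=
  sum_nonneg fun t _ => mul_nonneg (hdI t) (inv_one_sub_nonneg P hP0 hProw hP t s)

theorem vecMul_nonsing_inv_vecMul {K : Matrix ι ι ℝ} (hK : IsUnit K) (v : ι → ℝ) :
    v ᵥ* K⁻¹ ᵥ* K = v := by
  rw [vecMul_vecMul, nonsing_inv_mul _ ((isUnit_iff_isUnit_det _).mp hK), vecMul_one]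

theorem sum_mul_apply_eq_sub {P : Matrix ι ι ℝ} {m dI : ι → ℝ} (hbal : m ᵥ* (1 - P) = dI)
    (t : ι) : ∑ s, m s * P s t = m t - dI t := by
  rw [← hbal, vecMul_sub, vecMul_one]
  simp [vecMul, dotProduct]

theorem diagonal_mul_one_sub_apply_eq_zero_of_right {P : Matrix ι ι ℝ} {m dI : ι → ℝ}
    (hP0 : ∀ s t, 0 ≤ P s t) (hm0 : ∀ s, 0 ≤ m s) (hdI : ∀ s, 0 ≤ dI s)
    (hbal : m ᵥ* (1 - P) = dI) {t : ι} (ht : m t = 0) (s : ι) :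
    (diagonal m * (1 - P)) s t = 0 := by
  have hflow : m s * P s t = 0 := by
    have hsum := sum_mul_apply_eq_sub hbal t
    refine (sum_eq_zero_iff_of_nonneg fun u _ => mul_nonneg (hm0 u) (hP0 u t)).mp ?_ s
      (mem_univ s)
    linarith [sum_nonneg fun u (_ : u ∈ univ) => mul_nonneg (hm0 u) (hP0 u t), hdI t]
  rcases eq_or_ne s t with rfl | hst
  · simp [ht]
  · simp [one_apply_ne hst, hflow]

theorem two_mul_dotProduct_diagonal_mul_one_sub_mulVec (P : Matrix ι ι ℝ) {m dI : ι → ℝ}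
    (hbal : m ᵥ* (1 - P) = dI) (y : ι → ℝ) :
    2 * (y ⬝ᵥ (diagonal m * (1 - P)) *ᵥ y) =
      ∑ s, (m s * (1 - ∑ t, P s t) + dI s) * y s ^ 2 +
        ∑ s, ∑ t, m s * P s t * (y s - y t) ^ 2 := by
  have hin : ∑ s, ∑ t, m s * P s t * y t ^ 2 = ∑ t, (m t - dI t) * y t ^ 2 := by
    rw [sum_comm]
    simp_rw [← sum_mul_apply_eq_sub hbal, sum_mul]
  have lhs : y ⬝ᵥ (diagonal m * (1 - P)) *ᵥ y =
      ∑ s, m s * y s ^ 2 - ∑ s, ∑ t, m s * P s t * y s * y t := by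
    simp only [dotProduct, mulVec, diagonal_mul, Matrix.sub_apply, one_apply, mul_sub, sub_mul,
      ite_mul, zero_mul, mul_ite, mul_zero, sum_sub_distrib, sum_ite_eq, mem_univ, if_true,
      mul_sum]
    congr 1
    · refine sum_congr rfl fun s _ => by ring
    · refine sum_congr rfl fun s _ => sum_congr rfl fun t _ => by ring
  have rhs : ∑ s, ∑ t, m s * P s t * (y s - y t) ^ 2 =
      ∑ s, ∑ t, m s * P s t * y s ^ 2 - 2 * ∑ s, ∑ t, m s * P s t * y s * y t +
        ∑ s, ∑ t, m s * P s t * y t ^ 2 := by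
    simp only [mul_sum, ← sum_sub_distrib, ← sum_add_distrib]
    exact sum_congr rfl fun s _ => sum_congr rfl fun t _ => by ring
  have rhs1 : ∑ s, (m s * (1 - ∑ t, P s t) + dI s) * y s ^ 2 =
      ∑ s, m s * y s ^ 2 - ∑ s, ∑ t, m s * P s t * y s ^ 2 + ∑ s, dI s * y s ^ 2 := by
    simp only [mul_sub, mul_one, mul_sum, add_mul, sub_mul, sum_mul,
      sum_add_distrib, sum_sub_distrib]
  have hsplit : ∑ t, (m t - dI t) * y t ^ 2 = ∑ t, m t * y t ^ 2 - ∑ t, dI t * y t ^ 2 := by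
    simp only [sub_mul, sum_sub_distrib]
  rw [lhs, rhs, rhs1, hin, hsplit]
  ring

theorem dotProduct_diagonal_mul_one_sub_mulVec_nonneg {P : Matrix ι ι ℝ} {m dI : ι → ℝ}
    (hP0 : ∀ s t, 0 ≤ P s t) (hProw : ∀ s, ∑ t, P s t ≤ 1) (hm0 : ∀ s, 0 ≤ m s)
    (hdI : ∀ s, 0 ≤ dI s) (hbal : m ᵥ* (1 - P) = dI) (y : ι → ℝ) :
    0 ≤ y ⬝ᵥ (diagonal m * (1 - P)) *ᵥ y := by
  have h := two_mul_dotProduct_diagonal_mul_one_sub_mulVec P hbal y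
  have h₁ : 0 ≤ ∑ s, (m s * (1 - ∑ t, P s t) + dI s) * y s ^ 2 :=
    sum_nonneg fun s _ => by have := hProw s; have := hm0 s; have := hdI s; positivity
  have h₂ : 0 ≤ ∑ s, ∑ t, m s * P s t * (y s - y t) ^ 2 :=
    sum_nonneg fun s _ => sum_nonneg fun t _ => by have := hm0 s; have := hP0 s t; positivity
  linarith

theorem eq_zero_of_dotProduct_diagonal_mul_one_sub_mulVec_eq_zero {P : Matrix ι ι ℝ}
    {m dI : ι → ℝ} (hP0 : ∀ s t, 0 ≤ P s t) (hProw : ∀ s, ∑ t, P s t ≤ 1) (hP : IsUnit (1 - P))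
    (hm0 : ∀ s, 0 ≤ m s) (hdI : ∀ s, 0 ≤ dI s) (hbal : m ᵥ* (1 - P) = dI) {y : ι → ℝ}
    (hy : y ⬝ᵥ (diagonal m * (1 - P)) *ᵥ y = 0) {s : ι} (hs : 0 < m s) : y s = 0 := by
  have h := two_mul_dotProduct_diagonal_mul_one_sub_mulVec P hbal y
  have h₁ : ∀ s, 0 ≤ (m s * (1 - ∑ t, P s t) + dI s) * y s ^ 2 := fun s => by
    have := hProw s; have := hm0 s; have := hdI s; positivity
  have h₂ : ∀ s t, 0 ≤ m s * P s t * (y s - y t) ^ 2 := fun s t => by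
    have := hm0 s; have := hP0 s t; positivity
  have hsum₁ := sum_nonneg fun s (_ : s ∈ univ) => h₁ s
  have hsum₂ := sum_nonneg fun s (_ : s ∈ univ) => sum_nonneg fun t (_ : t ∈ univ) => h₂ s t
  have hdiag : ∀ s, (m s * (1 - ∑ t, P s t) + dI s) * y s ^ 2 = 0 := fun s =>
    (sum_eq_zero_iff_of_nonneg fun s _ => h₁ s).mp (by linarith) s (mem_univ s)
  have hedge : ∀ s t, m s * P s t * (y s - y t) ^ 2 = 0 := fun s t =>
    (sum_eq_zero_iff_of_nonneg fun t _ => h₂ s t).mp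
      ((sum_eq_zero_iff_of_nonneg fun s _ => sum_nonneg fun t _ => h₂ s t).mp (by linarith) s
        (mem_univ s)) t (mem_univ t)
  set U := univ.filter fun s => 0 < m s ∧ y s ≠ 0
  have hrow : ∀ s ∈ U, ∑ t, P s t = 1 := fun s hs => by
    obtain ⟨hms, hys⟩ := (mem_filter.mp hs).2
    have hcoef := (mul_eq_zero.mp (hdiag s)).resolve_right (pow_ne_zero 2 hys)
    have := hProw s; have := hdI s
    nlinarith
  have hclosed : ∀ s ∈ U, ∀ t ∉ U, P s t = 0 := fun s hs t ht => by
    obtain ⟨hms, hys⟩ := (mem_filter.mp hs).2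
    by_contra hst
    have hmP : 0 < m s * P s t := mul_pos hms ((hP0 s t).lt_of_ne' hst)
    have hyt : y t = y s := by
      have := (mul_eq_zero.mp (hedge s t)).resolve_left hmP.ne'
      linarith [pow_eq_zero_iff (n := 2) two_ne_zero |>.mp this]
    have hmt : m s * P s t ≤ m t := by
      have := single_le_sum (fun u _ => mul_nonneg (hm0 u) (hP0 u t)) (mem_univ s)
      linarith [sum_mul_apply_eq_sub hbal t, hdI t]
    exact ht (mem_filter.mpr ⟨mem_univ t, hmP.trans_le hmt, hyt ▸ hys⟩)
  by_contra hys
  exact not_isUnit_one_sub_of_stochastic_on P ⟨s, by simp [U, hs, hys]⟩ hclosed hrow hP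

theorem range_eq_span_and_neg_definite_of_emphasis (Φ : Matrix ι κ ℝ) {P : Matrix ι ι ℝ}
    {m dI : ι → ℝ} (hP0 : ∀ s t, 0 ≤ P s t) (hProw : ∀ s, ∑ t, P s t ≤ 1) (hP : IsUnit (1 - P))
    (hm0 : ∀ s, 0 ≤ m s) (hdI : ∀ s, 0 ≤ dI s) (hbal : m ᵥ* (1 - P) = dI) :
    LinearMap.range (-(Φᵀ * diagonal m * (1 - P) * Φ)).mulVecLin =
        Submodule.span ℝ (Φ '' {s | 0 < m s}) ∧
      LinearMap.range (-(Φᵀ * diagonal m * (1 - P) * Φ))ᵀ.mulVecLin =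
        Submodule.span ℝ (Φ '' {s | 0 < m s}) ∧
      ∃ c > 0, ∀ x ∈ Submodule.span ℝ (Φ '' {s | 0 < m s}),
        x ⬝ᵥ (-(Φᵀ * diagonal m * (1 - P) * Φ)) *ᵥ x ≤ -c * (x ⬝ᵥ x) := by
  set B := diagonal m * (1 - P)
  have hzero : ∀ s ∉ {s | 0 < m s}, m s = 0 := fun s hs => le_antisymm (not_lt.mp hs) (hm0 s)
  have hnonneg := dotProduct_diagonal_mul_one_sub_mulVec_nonneg hP0 hProw hm0 hdI hbal
  have hnull : ∀ y, y ⬝ᵥ B *ᵥ y = 0 → ∀ s ∈ {s | 0 < m s}, y s = 0 := fun y hy s hs =>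
    eq_zero_of_dotProduct_diagonal_mul_one_sub_mulVec_eq_zero hP0 hProw hP hm0 hdI hbal hy hs
  have hrow : ∀ s ∉ {s | 0 < m s}, ∀ t, B s t = 0 := fun s hs t => by simp [B, hzero s hs]
  have hcol : ∀ t ∉ {s | 0 < m s}, ∀ s, Bᵀ t s = 0 := fun t ht s =>
    diagonal_mul_one_sub_apply_eq_zero_of_right hP0 hm0 hdI hbal (hzero t ht) s
  obtain ⟨hrange, hneg⟩ := range_eq_span_and_neg_definite Φ hrow hnonneg hnull
  obtain ⟨hrangeT, -⟩ := range_eq_span_and_neg_definite Φ hcol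
    (fun y => (dotProduct_transpose_mulVec B y y).symm ▸ hnonneg y)
    (fun y hy => hnull y ((dotProduct_transpose_mulVec B y y).symm.trans hy))
  have hB : Φᵀ * diagonal m * (1 - P) * Φ = Φᵀ * B * Φ := by simp only [B, Matrix.mul_assoc]
  have hBT : (Φᵀ * B * Φ)ᵀ = Φᵀ * Bᵀ * Φ := by
    simp only [transpose_mul, transpose_transpose, Matrix.mul_assoc]
  rw [hB, transpose_neg, hBT]
  exact ⟨hrange, hrangeT, hneg⟩

end Emphasis

theorem range_and_negdef_on_span_general
    {N M n : ℕ}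
    (p : Fin N → Fin M → Fin N → ℝ) (π : Fin N → Fin M → ℝ)
    (γf lf iF d : Fin N → ℝ) (Φ : Matrix (Fin N) (Fin n) ℝ)
    (hp0 : ∀ s a s', 0 ≤ p s a s') (hp1 : ∀ s a, ∑ s', p s a s' = 1)
    (hπ0 : ∀ s a, 0 ≤ π s a) (hπ1 : ∀ s, ∑ a, π s a = 1)
    (hγ : ∀ s, 0 ≤ γf s ∧ γf s ≤ 1)
    (hlf : ∀ s, 0 ≤ lf s ∧ lf s ≤ 1) (hi : ∀ s, 0 ≤ iF s)
    -- Assumption 1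
    (hA1i : IsUnit (1 - Pmat p π * Matrix.diagonal γf))
    -- steady-state distribution of the behavior policy
    (hd0 : ∀ s, 0 < d s) :
    -- (i) range(C) = range(Cᵀ) = span{φ(s) : s ∈ 𝒥₁}
    LinearMap.range (Cmat p π γf lf d iF Φ).mulVecLin =
        Submodule.span ℝ {x : Fin n → ℝ |
          ∃ s : Fin N, 0 < MbarDiag p π γf lf d iF s ∧ x = (Φ s : Fin n → ℝ)} ∧
    LinearMap.range ((Cmat p π γf lf d iF Φ)ᵀ).mulVecLin =
        Submodule.span ℝ {x : Fin n → ℝ |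
          ∃ s : Fin N, 0 < MbarDiag p π γf lf d iF s ∧ x = (Φ s : Fin n → ℝ)} ∧
    -- (ii) ∃ c > 0 with xᵀCx ≤ −c|x|² on span{φ(s) : s ∈ 𝒥₁}
    ∃ c : ℝ, 0 < c ∧
      ∀ x : Fin n → ℝ,
        x ∈ Submodule.span ℝ {x : Fin n → ℝ |
            ∃ s : Fin N, 0 < MbarDiag p π γf lf d iF s ∧ x = (Φ s : Fin n → ℝ)} →
        x ⬝ᵥ (Cmat p π γf lf d iF Φ).mulVec x ≤ -c * (x ⬝ᵥ x) := by
  have hP0 := Pmat_nonneg hp0 hπ0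
  have hProw : ∀ s, ∑ t, Pmat p π s t ≤ 1 := fun s => (sum_Pmat_row hp1 hπ1 s).le
  have hPlam0 := Plam_nonneg hP0 hProw hγ hlf hA1i
  have hPlamrow := sum_Plam_row_le_one hP0 hProw hγ hlf hA1i
  have hK := isUnit_one_sub_Plam hP0 hProw hγ hlf hA1i
  have hdI : ∀ s, 0 ≤ d s * iF s := fun s => mul_nonneg (hd0 s).le (hi s)
  have hJ : {x : Fin n → ℝ | ∃ s, 0 < MbarDiag p π γf lf d iF s ∧ x = Φ s} =
      Φ '' {s | 0 < MbarDiag p π γf lf d iF s} :=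
    Set.ext fun _ => ⟨fun ⟨s, hs, hx⟩ => ⟨s, hs, hx.symm⟩, fun ⟨s, hs, hx⟩ => ⟨s, hs, hx.symm⟩⟩
  rw [hJ]
  exact range_eq_span_and_neg_definite_of_emphasis Φ hPlam0 hPlamrow hK
    (vecMul_inv_one_sub_nonneg hPlam0 hPlamrow hK hdI) hdI (vecMul_nonsing_inv_vecMul hK _)

theorem range_and_negdef_on_span
    {N M n : ℕ}
    (p : Fin N → Fin M → Fin N → ℝ) (π πb : Fin N → Fin M → ℝ)
    (γf lf iF d : Fin N → ℝ) (Φ : Matrix (Fin N) (Fin n) ℝ)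
    (hp0 : ∀ s a s', 0 ≤ p s a s') (hp1 : ∀ s a, ∑ s', p s a s' = 1)
    (hπ0 : ∀ s a, 0 ≤ π s a) (hπ1 : ∀ s, ∑ a, π s a = 1)
    (hπb0 : ∀ s a, 0 ≤ πb s a) (hπb1 : ∀ s, ∑ a, πb s a = 1)
    (hγ : ∀ s, 0 ≤ γf s ∧ γf s ≤ 1) (hγ1 : ∃ s, γf s < 1)
    (hlf : ∀ s, 0 ≤ lf s ∧ lf s ≤ 1) (hi : ∀ s, 0 ≤ iF s)
    -- Assumption 1
    (hA1i : IsUnit (1 - Pmat p π * Matrix.diagonal γf))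
    (hirr : ∀ s s', ∃ k : ℕ, 1 ≤ k ∧ 0 < (Pmat p πb ^ k) s s')
    (hsupp : ∀ s a, 0 < π s a → 0 < πb s a)
    -- steady-state distribution of the behavior policy
    (hd0 : ∀ s, 0 < d s) (hd1 : ∑ s, d s = 1)
    (hdstat : ∀ s', ∑ s, d s * Pmat p πb s s' = d s')
    -- i(s) > 0 for at least one state
    (hipos : ∃ s, 0 < iF s) :
    -- (i) range(C) = range(Cᵀ) = span{φ(s) : s ∈ 𝒥₁}
    LinearMap.range (Cmat p π γf lf d iF Φ).mulVecLin =
        Submodule.span ℝ {x : Fin n → ℝ |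
          ∃ s : Fin N, 0 < MbarDiag p π γf lf d iF s ∧ x = (Φ s : Fin n → ℝ)} ∧
    LinearMap.range ((Cmat p π γf lf d iF Φ)ᵀ).mulVecLin =
        Submodule.span ℝ {x : Fin n → ℝ |
          ∃ s : Fin N, 0 < MbarDiag p π γf lf d iF s ∧ x = (Φ s : Fin n → ℝ)} ∧
    -- (ii) ∃ c > 0 with xᵀCx ≤ −c|x|² on span{φ(s) : s ∈ 𝒥₁}
    ∃ c : ℝ, 0 < c ∧
      ∀ x : Fin n → ℝ,
        x ∈ Submodule.span ℝ {x : Fin n → ℝ |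
            ∃ s : Fin N, 0 < MbarDiag p π γf lf d iF s ∧ x = (Φ s : Fin n → ℝ)} →
        x ⬝ᵥ (Cmat p π γf lf d iF Φ).mulVec x ≤ -c * (x ⬝ᵥ x) :=
  range_and_negdef_on_span_general p π γf lf iF d Φ hp0 hp1 hπ0 hπ1 hγ hlf hi hA1i hd0

end ETD14
end
end

section
/- Let Assumption 1(ii) hold and fix a constant stepsize α > 0. Let Q(dθ′ | ξ, θ) be the stochastic kernel on B given Ξ×B describing the conditional distribution of θ_{t+1}^α given ξ_t = ξ and θ_t^α = θ, for iterates generated by the perturbed version of constrained ETD(λ) (or of Variant 1 or Variant 2). Then for each bounded set E ⊂ Ξ there exist β ∈ (0,1] and a probability measure Q₁ on B such that Q(dθ′ | ξ, θ) ≥ β·Q₁(dθ′) for all ξ ∈ E and θ ∈ B. -/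
/-!
Only rewards in a fixed interval `[-T, T]` are used; for every `(s, a, s')` they carry at least
half of the reward law. For such rewards, `ξ ∈ E` and `θ ∈ B`, the point `θ + αY` stays in a fixed
ball, so the law of `θ + αY + αΔ` has a density bounded below by a constant on `B` (the density of
`Δ` is positive and continuous, hence bounded below on compacts). On `B` the projection is the
identity, and `Q₁` is the normalized Lebesgue measure on `B`.
-/

open MeasureTheory Filter Topology Matrix
open scoped ENNReal Classical

noncomputable section
namespace ETD19

def rho {N M : ℕ} (π πb : Fin N → Fin M → ℝ) (s : Fin N) (a : Fin M) : ℝ := π s a / πb s a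

def Pmat {N M : ℕ} (p : Fin N → Fin M → Fin N → ℝ) (pol : Fin N → Fin M → ℝ) :
    Matrix (Fin N) (Fin N) ℝ :=
  Matrix.of fun s s' => ∑ a, pol s a * p s a s'

def eunorm {n : ℕ} (x : Fin n → ℝ) : ℝ := Real.sqrt (∑ j, x j ^ 2)

def projB {n : ℕ} (rB : ℝ) (x : Fin n → ℝ) : Fin n → ℝ :=
  if eunorm x ≤ rB then x else (rB / eunorm x) • x

/-- The space Ξ = ℝ^{n+1} × 𝒮 × 𝒜 × 𝒮 of ξ = (e, F, s, a, s'). -/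
abbrev XiSpace (N M n : ℕ) := ((Fin n → ℝ) × ℝ) × Fin N × Fin M × Fin N

end ETD19

section Measure

open Metric

theorem MeasureTheory.Measure.eventually_lt_measure_closedBall {X : Type*} [PseudoMetricSpace X]
    [MeasurableSpace X] (μ : Measure X) (x : X) {c : ℝ≥0∞} (hc : c < μ Set.univ) :
    ∀ᶠ T : ℝ in atTop, c < μ (closedBall x T) := by
  have hmono : Monotone fun T : ℝ => closedBall x T := fun _ _ h => closedBall_subset_closedBall h
  have hunion : ⋃ T : ℝ, closedBall x T = Set.univ :=
    Set.eq_univ_of_forall fun y => Set.mem_iUnion.2 ⟨dist y x, mem_closedBall.2 le_rfl⟩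
  have := tendsto_measure_iUnion_atTop (μ := μ) hmono
  rw [hunion] at this
  exact this.eventually_const_lt hc

theorem IsCompact.exists_pos_mul_le_withDensity {X : Type*} [TopologicalSpace X]
    [MeasurableSpace X] (μ : Measure X) {ρ : X → ℝ} {K : Set X} (hK : IsCompact K)
    (hρc : ContinuousOn ρ K) (hρpos : ∀ x ∈ K, 0 < ρ x) :
    ∃ m : ℝ, 0 < m ∧ ∀ A ⊆ K, MeasurableSet A →
      ENNReal.ofReal m * μ A ≤ μ.withDensity (fun x => ENNReal.ofReal (ρ x)) A := by
  obtain ⟨m, hm, hmρ⟩ := hK.exists_forall_le' hρc hρpos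
  refine ⟨m, hm, fun A hAK hA => ?_⟩
  rw [withDensity_apply _ hA, ← setLIntegral_const]
  exact setLIntegral_mono' hA fun x hx => ENNReal.ofReal_le_ofReal (hmρ x (hAK hx))

theorem MeasureTheory.Measure.addHaar_preimage_add_smul {E : Type*} [NormedAddCommGroup E]
    [NormedSpace ℝ E] [MeasurableSpace E] [BorelSpace E] [FiniteDimensional ℝ E]
    (μ : Measure E) [μ.IsAddHaarMeasure] (v : E) {α : ℝ} (hα : α ≠ 0) (A : Set E) :
    μ ((fun Δ => v + α • Δ) ⁻¹' A) = ENNReal.ofReal |(α ^ Module.finrank ℝ E)⁻¹| * μ A := by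
  rw [← measure_preimage_add μ v A, ← Measure.addHaar_preimage_smul μ hα]
  rfl

theorem MeasureTheory.Measure.exists_pos_mul_le_withDensity_preimage_add_smul {E : Type*}
    [NormedAddCommGroup E] [NormedSpace ℝ E] [MeasurableSpace E] [BorelSpace E]
    [FiniteDimensional ℝ E] (μ : Measure E) [μ.IsAddHaarMeasure] {ρ : E → ℝ}
    (hρc : Continuous ρ) (hρpos : ∀ x, 0 < ρ x) {α : ℝ} (hα : 0 < α) (C : ℝ) :
    ∃ c : ℝ, 0 < c ∧ ∀ v : E, ‖v‖ ≤ C → ∀ A ⊆ closedBall 0 C, MeasurableSet A →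
      ENNReal.ofReal c * μ A ≤
        μ.withDensity (fun x => ENNReal.ofReal (ρ x)) ((fun Δ => v + α • Δ) ⁻¹' A) := by
  obtain ⟨m, hm, hmρ⟩ := (isCompact_closedBall (0 : E) (2 * C / α)).exists_pos_mul_le_withDensity
    μ hρc.continuousOn fun x _ => hρpos x
  set k : ℝ := |(α ^ Module.finrank ℝ E)⁻¹|
  refine ⟨m * k, mul_pos hm (abs_pos.2 (inv_ne_zero (pow_ne_zero _ hα.ne'))), ?_⟩
  intro v hv A hAC hA
  have hpre : (fun Δ => v + α • Δ) ⁻¹' A ⊆ closedBall 0 (2 * C / α) := by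
    intro Δ hΔ
    have hsum : ‖v + α • Δ‖ ≤ C := mem_closedBall_zero_iff.1 (hAC hΔ)
    have hΔα : α * ‖Δ‖ ≤ 2 * C := by
      calc α * ‖Δ‖ = ‖(v + α • Δ) - v‖ := by
            rw [add_sub_cancel_left, norm_smul, Real.norm_of_nonneg hα.le]
        _ ≤ ‖v + α • Δ‖ + ‖v‖ := norm_sub_le _ _
        _ ≤ 2 * C := by linarith
    rw [mem_closedBall_zero_iff, le_div_iff₀ hα]
    linarith
  have hmeas : MeasurableSet ((fun Δ => v + α • Δ) ⁻¹' A) :=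
    (continuous_const.add (continuous_const_smul α)).measurable hA
  calc ENNReal.ofReal (m * k) * μ A
      = ENNReal.ofReal m * μ ((fun Δ => v + α • Δ) ⁻¹' A) := by
        rw [μ.addHaar_preimage_add_smul v hα.ne', ENNReal.ofReal_mul hm.le, mul_assoc]
    _ ≤ _ := hmρ _ hpre hmeas

theorem MeasureTheory.Measure.mul_measure_le_lintegral_of_forall_mem_le {X : Type*}
    [MeasurableSpace X] (μ : Measure X) {S : Set X} (hS : MeasurableSet S) {L : ℝ≥0∞}
    {f : X → ℝ≥0∞} (hf : ∀ x ∈ S, L ≤ f x) : L * μ S ≤ ∫⁻ x, f x ∂μ := by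
  rw [← setLIntegral_const]
  exact (setLIntegral_mono' hS hf).trans (setLIntegral_le_lintegral S f)

open ProbabilityTheory in
theorem MeasureTheory.Measure.exists_ofReal_mul_cond_le {X : Type*} [MeasurableSpace X]
    (μ : Measure X) {S : Set X} (hS : MeasurableSet S) (hS0 : μ S ≠ 0) (hStop : μ S ≠ ⊤)
    {c : ℝ≥0∞} (hc0 : c ≠ 0) (hctop : c ≠ ⊤) :
    ∃ β : ℝ, 0 < β ∧ β ≤ 1 ∧ ∀ D, ENNReal.ofReal β * μ[D|S] ≤ c * μ (S ∩ D) := by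
  refine ⟨min 1 (c * μ S).toReal,
    lt_min one_pos (ENNReal.toReal_pos (mul_ne_zero hc0 hS0) (ENNReal.mul_ne_top hctop hStop)),
    min_le_left _ _, fun D => ?_⟩
  have hβ : ENNReal.ofReal (min 1 (c * μ S).toReal) ≤ c * μ S :=
    (ENNReal.ofReal_le_ofReal (min_le_right _ _)).trans_eq
      (ENNReal.ofReal_toReal (ENNReal.mul_ne_top hctop hStop))
  calc ENNReal.ofReal (min 1 (c * μ S).toReal) * μ[D|S]
      ≤ c * μ S * ((μ S)⁻¹ * μ (S ∩ D)) := by rw [cond_apply hS]; gcongr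
    _ = c * μ (S ∩ D) := by
      rw [mul_assoc, ← mul_assoc (μ S), ENNReal.mul_inv_cancel hS0 hStop, one_mul]

end Measure

namespace ETD19

open Metric ProbabilityTheory

section Ball

variable {n : ℕ}

theorem continuous_eunorm : Continuous (eunorm (n := n)) :=
  Real.continuous_sqrt.comp (continuous_finsetSum _ fun j _ => (continuous_apply j).pow 2)

theorem abs_apply_le_eunorm (x : Fin n → ℝ) (j : Fin n) : |x j| ≤ eunorm x := by
  rw [← Real.sqrt_sq_eq_abs]
  exact Real.sqrt_le_sqrt (Finset.single_le_sum (fun i _ => sq_nonneg (x i)) (Finset.mem_univ j))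

theorem norm_le_eunorm (x : Fin n → ℝ) : ‖x‖ ≤ eunorm x :=
  (pi_norm_le_iff_of_nonneg (Real.sqrt_nonneg _)).2 fun j => abs_apply_le_eunorm x j

theorem projB_of_eunorm_le {rB : ℝ} {x : Fin n → ℝ} (hx : eunorm x ≤ rB) : projB rB x = x :=
  if_pos hx

theorem measurableSet_eunorm_le (rB : ℝ) : MeasurableSet {x : Fin n → ℝ | eunorm x ≤ rB} :=
  measurableSet_le continuous_eunorm.measurable measurable_const

theorem eunorm_le_subset_closedBall (rB : ℝ) :
    {x : Fin n → ℝ | eunorm x ≤ rB} ⊆ closedBall 0 rB :=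
  fun x hx => mem_closedBall_zero_iff.2 ((norm_le_eunorm x).trans hx)

theorem volume_eunorm_le_ne_zero {rB : ℝ} (hrB : 0 < rB) :
    volume {x : Fin n → ℝ | eunorm x ≤ rB} ≠ 0 := by
  have hopen : IsOpen {x : Fin n → ℝ | eunorm x < rB} := isOpen_lt continuous_eunorm continuous_const
  have hzero : (0 : Fin n → ℝ) ∈ {x | eunorm x < rB} := by simpa [eunorm] using hrB
  exact ((hopen.measure_pos volume ⟨0, hzero⟩).trans_le
    (measure_mono fun _ (hx : eunorm _ < rB) => hx.le)).ne'

theorem volume_eunorm_le_ne_top (rB : ℝ) : volume {x : Fin n → ℝ | eunorm x ≤ rB} ≠ ⊤ :=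
  ((measure_mono (eunorm_le_subset_closedBall rB)).trans_lt measure_closedBall_lt_top).ne

theorem measure_preimage_le_lintegral_indicator_projB (μ : Measure (Fin n → ℝ))
    (rB : ℝ) (v : Fin n → ℝ) (α : ℝ) {D : Set (Fin n → ℝ)} (hD : MeasurableSet D) :
    μ ((fun Δ => v + α • Δ) ⁻¹' ({x | eunorm x ≤ rB} ∩ D)) ≤
      ∫⁻ Δ, D.indicator (fun _ => (1 : ℝ≥0∞)) (projB rB (v + α • Δ)) ∂μ := by
  have hmeas : MeasurableSet ((fun Δ => v + α • Δ) ⁻¹' ({x | eunorm x ≤ rB} ∩ D)) :=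
    (continuous_const.add (continuous_const_smul α)).measurable
      ((measurableSet_eunorm_le rB).inter hD)
  rw [← lintegral_indicator_one hmeas]
  refine lintegral_mono (Set.indicator_le' (fun Δ hΔ => ?_) fun _ _ => zero_le)
  rw [projB_of_eunorm_le hΔ.1, Set.indicator_of_mem hΔ.2]
  rfl

end Ball

section Increment

variable {N M n : ℕ}

def tdError (π πb : Fin N → Fin M → ℝ) (γf : Fin N → ℝ) (Φ : Matrix (Fin N) (Fin n) ℝ)
    (x : Fin N × Fin M × Fin N) (θ : Fin n → ℝ) (r : ℝ) : ℝ :=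
  rho π πb x.1 x.2.1 * (r + γf x.2.2 * ((Φ x.2.2 : Fin n → ℝ) ⬝ᵥ θ) - (Φ x.1 : Fin n → ℝ) ⬝ᵥ θ)

theorem exists_abs_tdError_le (π πb : Fin N → Fin M → ℝ) (γf : Fin N → ℝ)
    (Φ : Matrix (Fin N) (Fin n) ℝ) (r₀ T : ℝ) :
    ∃ C, ∀ x θ r, ‖θ‖ ≤ r₀ → |r| ≤ T → |tdError π πb γf Φ x θ r| ≤ C := by
  have hcont : Continuous fun p : (Fin N × Fin M × Fin N) × (Fin n → ℝ) × ℝ =>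
      tdError π πb γf Φ p.1 p.2.1 p.2.2 :=
    continuous_prod_of_discrete_left.2 fun x => by unfold tdError; fun_prop
  obtain ⟨C, hC⟩ := (isCompact_univ.prod ((isCompact_closedBall (0 : Fin n → ℝ) r₀).prod
    (isCompact_closedBall (0 : ℝ) T))).exists_bound_of_continuousOn hcont.continuousOn
  refine ⟨C, fun x θ r hθ hr => hC (x, θ, r) ⟨Set.mem_univ x, ?_, ?_⟩⟩
  · exact mem_closedBall_zero_iff.2 hθ
  · exact mem_closedBall_zero_iff.2 (by rwa [Real.norm_eq_abs])

theorem norm_increment_le {π πb : Fin N → Fin M → ℝ} {γf : Fin N → ℝ}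
    {Φ : Matrix (Fin N) (Fin n) ℝ} {ψK : (Fin n → ℝ) → (Fin n → ℝ)}
    (hψle : ∀ x, ‖ψK x‖ ≤ ‖x‖) {Yf : XiSpace N M n → (Fin n → ℝ) → ℝ → (Fin n → ℝ)}
    (hYf : (∀ ξ θ r, Yf ξ θ r = tdError π πb γf Φ ξ.2 θ r • ξ.1.1) ∨
      (∀ ξ θ r, Yf ξ θ r = tdError π πb γf Φ ξ.2 θ r • ψK ξ.1.1) ∨
      (∀ ξ θ r, Yf ξ θ r = ψK (tdError π πb γf Φ ξ.2 θ r • ξ.1.1)))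
    (ξ : XiSpace N M n) (θ : Fin n → ℝ) (r : ℝ) :
    ‖Yf ξ θ r‖ ≤ |tdError π πb γf Φ ξ.2 θ r| * ‖ξ.1.1‖ := by
  rcases hYf with h | h | h <;> rw [h ξ θ r]
  · rw [norm_smul, Real.norm_eq_abs]
  · rw [norm_smul, Real.norm_eq_abs]
    exact mul_le_mul_of_nonneg_left (hψle _) (abs_nonneg _)
  · exact (hψle _).trans_eq (by rw [norm_smul, Real.norm_eq_abs])

theorem exists_norm_increment_le {π πb : Fin N → Fin M → ℝ} {γf : Fin N → ℝ}
    {Φ : Matrix (Fin N) (Fin n) ℝ} {ψK : (Fin n → ℝ) → (Fin n → ℝ)}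
    (hψle : ∀ x, ‖ψK x‖ ≤ ‖x‖) {Yf : XiSpace N M n → (Fin n → ℝ) → ℝ → (Fin n → ℝ)}
    (hYf : (∀ ξ θ r, Yf ξ θ r = tdError π πb γf Φ ξ.2 θ r • ξ.1.1) ∨
      (∀ ξ θ r, Yf ξ θ r = tdError π πb γf Φ ξ.2 θ r • ψK ξ.1.1) ∨
      (∀ ξ θ r, Yf ξ θ r = ψK (tdError π πb γf Φ ξ.2 θ r • ξ.1.1)))
    (R r₀ T : ℝ) :
    ∃ C, 0 ≤ C ∧ ∀ ξ θ r, ‖ξ.1.1‖ ≤ R → ‖θ‖ ≤ r₀ → |r| ≤ T → ‖Yf ξ θ r‖ ≤ C := by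
  obtain ⟨Cδ, hCδ⟩ := exists_abs_tdError_le π πb γf Φ r₀ T
  refine ⟨|Cδ| * |R|, by positivity, fun ξ θ r he hθ hr => ?_⟩
  exact (norm_increment_le hψle hYf ξ θ r).trans (mul_le_mul
    ((hCδ ξ.2 θ r hθ hr).trans (le_abs_self _)) (he.trans (le_abs_self _))
    (norm_nonneg _) (abs_nonneg _))

end Increment

theorem kernel_minorization_general
    {N M n : ℕ}
    (π πb : Fin N → Fin M → ℝ)
    (γf : Fin N → ℝ) (Φ : Matrix (Fin N) (Fin n) ℝ)
    -- reward distributions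
    (q : Fin N → Fin M → Fin N → Measure ℝ)
    (hq : ∀ s a s', IsProbabilityMeasure (q s a s'))
    -- the constant stepsize and the radius of B
    (α : ℝ) (hα : 0 < α) (rB : ℝ) (hrB : 0 < rB)
    -- law of the i.i.d. perturbations: zero mean, finite variance, positive
    -- continuous density w.r.t. Lebesgue measure
    (pΔ : Measure (Fin n → ℝ))
    (hpΔdens : ∃ ρd : (Fin n → ℝ) → ℝ, Continuous ρd ∧ (∀ x, 0 < ρd x) ∧
        pΔ = MeasureTheory.volume.withDensity (fun x => ENNReal.ofReal (ρd x)))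
    -- the bounded Lipschitz truncation ψ_K used by the variants
    (ψK : (Fin n → ℝ) → (Fin n → ℝ))
    (hψle : ∀ x, ‖ψK x‖ ≤ ‖x‖)
    -- the (unperturbed) increment Y of the algorithm: constrained ETD(λ), or
    -- Variant 1, or Variant 2
    (Yf : XiSpace N M n → (Fin n → ℝ) → ℝ → (Fin n → ℝ))
    (hYf :
      (∀ ξ θ r, Yf ξ θ r = (rho π πb ξ.2.1 ξ.2.2.1 *
          (r + γf ξ.2.2.2 * ((Φ ξ.2.2.2 : Fin n → ℝ) ⬝ᵥ θ) -
            (Φ ξ.2.1 : Fin n → ℝ) ⬝ᵥ θ)) • ξ.1.1) ∨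
      (∀ ξ θ r, Yf ξ θ r = (rho π πb ξ.2.1 ξ.2.2.1 *
          (r + γf ξ.2.2.2 * ((Φ ξ.2.2.2 : Fin n → ℝ) ⬝ᵥ θ) -
            (Φ ξ.2.1 : Fin n → ℝ) ⬝ᵥ θ)) • ψK ξ.1.1) ∨
      (∀ ξ θ r, Yf ξ θ r = ψK ((rho π πb ξ.2.1 ξ.2.2.1 *
          (r + γf ξ.2.2.2 * ((Φ ξ.2.2.2 : Fin n → ℝ) ⬝ᵥ θ) -
            (Φ ξ.2.1 : Fin n → ℝ) ⬝ᵥ θ)) • ξ.1.1))) :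
    -- conclusion: minorization of the one-step kernel of the θ-iterate,
    -- Q(D | ξ, θ) = ∫∫ 1(Π_B(θ + αY(ξ,θ,r) + αΔ) ∈ D) pΔ(dΔ) q(dr | s,a,s'),
    -- uniformly over bounded sets E ⊂ Ξ and θ ∈ B
    ∀ E : Set (XiSpace N M n),
      (∃ R : ℝ, ∀ ξ ∈ E, ‖ξ.1.1‖ ≤ R ∧ |ξ.1.2| ≤ R) →
      ∃ β : ℝ, 0 < β ∧ β ≤ 1 ∧
      ∃ Q₁ : Measure (Fin n → ℝ), IsProbabilityMeasure Q₁ ∧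
        Q₁ {θ' : Fin n → ℝ | eunorm θ' ≤ rB} = 1 ∧
        ∀ ξ ∈ E, ∀ θ : Fin n → ℝ, eunorm θ ≤ rB →
          ∀ D : Set (Fin n → ℝ), MeasurableSet D →
            ENNReal.ofReal β * Q₁ D ≤
              ∫⁻ r, ∫⁻ Δ, D.indicator (fun _ => (1 : ℝ≥0∞))
                  (projB rB (θ + α • Yf ξ θ r + α • Δ)) ∂pΔ ∂(q ξ.2.1 ξ.2.2.1 ξ.2.2.2) := by
  rintro E ⟨R, hR⟩
  obtain ⟨ρd, hρc, hρpos, rfl⟩ := hpΔdens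
  set B := {θ' : Fin n → ℝ | eunorm θ' ≤ rB}
  have hB0 : volume B ≠ 0 := volume_eunorm_le_ne_zero hrB
  have hBtop : volume B ≠ ⊤ := volume_eunorm_le_ne_top rB
  obtain ⟨T, hT⟩ := (eventually_all.2 fun x : Fin N × Fin M × Fin N =>
    (q x.1 x.2.1 x.2.2).eventually_lt_measure_closedBall 0 (c := 2⁻¹) (by simp)).exists
  obtain ⟨CY, hCY0, hCY⟩ := exists_norm_increment_le hψle hYf R rB T
  set C := rB + α * CY
  obtain ⟨c, hc, hc_le⟩ :=
    volume.exists_pos_mul_le_withDensity_preimage_add_smul hρc hρpos hα C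
  obtain ⟨β, hβ0, hβ1, hβ⟩ := volume.exists_ofReal_mul_cond_le (measurableSet_eunorm_le rB)
    hB0 hBtop (c := ENNReal.ofReal c * 2⁻¹) (by simpa using hc)
    (ENNReal.mul_ne_top ENNReal.ofReal_ne_top (by simp))
  refine ⟨β, hβ0, hβ1, volume[|B], cond_isProbabilityMeasure_of_finite hB0 hBtop,
    cond_apply_self hB0 hBtop, ?_⟩
  intro ξ hξ θ hθ D hD
  have hθ' : ‖θ‖ ≤ rB := (norm_le_eunorm θ).trans hθ
  have hBC : B ∩ D ⊆ closedBall 0 C := fun x hx => closedBall_subset_closedBall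
    (le_add_of_nonneg_right (by positivity)) (eunorm_le_subset_closedBall rB hx.1)
  have hinner : ∀ r ∈ closedBall (0 : ℝ) T, ENNReal.ofReal c * volume (B ∩ D) ≤
      ∫⁻ Δ, D.indicator (fun _ => (1 : ℝ≥0∞)) (projB rB (θ + α • Yf ξ θ r + α • Δ))
        ∂volume.withDensity fun x => ENNReal.ofReal (ρd x) := by
    intro r hr
    have hv : ‖θ + α • Yf ξ θ r‖ ≤ C := by
      refine (norm_add_le _ _).trans (add_le_add hθ' ?_)
      rw [norm_smul, Real.norm_of_nonneg hα.le]
      exact mul_le_mul_of_nonneg_left (hCY ξ θ r (hR ξ hξ).1 hθ' (by simpa using hr)) hα.le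
    exact (hc_le _ hv _ hBC ((measurableSet_eunorm_le rB).inter hD)).trans
      (measure_preimage_le_lintegral_indicator_projB _ rB _ α hD)
  calc ENNReal.ofReal β * volume[D|B]
      ≤ ENNReal.ofReal c * 2⁻¹ * volume (B ∩ D) := hβ D
    _ ≤ ENNReal.ofReal c * volume (B ∩ D) * q ξ.2.1 ξ.2.2.1 ξ.2.2.2 (closedBall 0 T) := by
        rw [mul_right_comm]
        gcongr
        exact (hT ξ.2).le
    _ ≤ _ := Measure.mul_measure_le_lintegral_of_forall_mem_le _ measurableSet_closedBall hinner

theorem kernel_minorization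
    {N M n : ℕ}
    (p : Fin N → Fin M → Fin N → ℝ) (π πb : Fin N → Fin M → ℝ)
    (γf : Fin N → ℝ) (Φ : Matrix (Fin N) (Fin n) ℝ)
    (hp0 : ∀ s a s', 0 ≤ p s a s') (hp1 : ∀ s a, ∑ s', p s a s' = 1)
    (hπ0 : ∀ s a, 0 ≤ π s a) (hπ1 : ∀ s, ∑ a, π s a = 1)
    (hπb0 : ∀ s a, 0 ≤ πb s a) (hπb1 : ∀ s, ∑ a, πb s a = 1)
    -- Assumption 1(ii)
    (hirr : ∀ s s', ∃ k : ℕ, 1 ≤ k ∧ 0 < (Pmat p πb ^ k) s s')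
    (hsupp : ∀ s a, 0 < π s a → 0 < πb s a)
    -- reward distributions
    (q : Fin N → Fin M → Fin N → Measure ℝ)
    (hq : ∀ s a s', IsProbabilityMeasure (q s a s'))
    -- the constant stepsize and the radius of B
    (α : ℝ) (hα : 0 < α) (rB : ℝ) (hrB : 0 < rB)
    -- law of the i.i.d. perturbations: zero mean, finite variance, positive
    -- continuous density w.r.t. Lebesgue measure
    (pΔ : Measure (Fin n → ℝ)) (hpΔ : IsProbabilityMeasure pΔ)
    (hpΔmean : ∫ x, x ∂pΔ = 0)
    (hpΔvar : Integrable (fun x : (Fin n → ℝ) => ‖x‖ ^ 2) pΔ)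
    (hpΔdens : ∃ ρd : (Fin n → ℝ) → ℝ, Continuous ρd ∧ (∀ x, 0 < ρd x) ∧
        pΔ = MeasureTheory.volume.withDensity (fun x => ENNReal.ofReal (ρd x)))
    -- the bounded Lipschitz truncation ψ_K used by the variants
    (K : ℝ) (hK : 0 < K) (ψK : (Fin n → ℝ) → (Fin n → ℝ))
    (hψbdd : ∃ Cb : ℝ, ∀ x, ‖ψK x‖ ≤ Cb)
    (hψlip : ∃ L : NNReal, LipschitzWith L ψK)
    (hψle : ∀ x, ‖ψK x‖ ≤ ‖x‖)
    (hψeq : ∀ x : Fin n → ℝ, ‖x‖ ≤ K → ψK x = x)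
    -- the (unperturbed) increment Y of the algorithm: constrained ETD(λ), or
    -- Variant 1, or Variant 2
    (Yf : XiSpace N M n → (Fin n → ℝ) → ℝ → (Fin n → ℝ))
    (hYf :
      (∀ ξ θ r, Yf ξ θ r = (rho π πb ξ.2.1 ξ.2.2.1 *
          (r + γf ξ.2.2.2 * ((Φ ξ.2.2.2 : Fin n → ℝ) ⬝ᵥ θ) -
            (Φ ξ.2.1 : Fin n → ℝ) ⬝ᵥ θ)) • ξ.1.1) ∨
      (∀ ξ θ r, Yf ξ θ r = (rho π πb ξ.2.1 ξ.2.2.1 *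
          (r + γf ξ.2.2.2 * ((Φ ξ.2.2.2 : Fin n → ℝ) ⬝ᵥ θ) -
            (Φ ξ.2.1 : Fin n → ℝ) ⬝ᵥ θ)) • ψK ξ.1.1) ∨
      (∀ ξ θ r, Yf ξ θ r = ψK ((rho π πb ξ.2.1 ξ.2.2.1 *
          (r + γf ξ.2.2.2 * ((Φ ξ.2.2.2 : Fin n → ℝ) ⬝ᵥ θ) -
            (Φ ξ.2.1 : Fin n → ℝ) ⬝ᵥ θ)) • ξ.1.1))) :
    -- conclusion: minorization of the one-step kernel of the θ-iterate,
    -- Q(D | ξ, θ) = ∫∫ 1(Π_B(θ + αY(ξ,θ,r) + αΔ) ∈ D) pΔ(dΔ) q(dr | s,a,s'),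
    -- uniformly over bounded sets E ⊂ Ξ and θ ∈ B
    ∀ E : Set (XiSpace N M n),
      (∃ R : ℝ, ∀ ξ ∈ E, ‖ξ.1.1‖ ≤ R ∧ |ξ.1.2| ≤ R) →
      ∃ β : ℝ, 0 < β ∧ β ≤ 1 ∧
      ∃ Q₁ : Measure (Fin n → ℝ), IsProbabilityMeasure Q₁ ∧
        Q₁ {θ' : Fin n → ℝ | eunorm θ' ≤ rB} = 1 ∧
        ∀ ξ ∈ E, ∀ θ : Fin n → ℝ, eunorm θ ≤ rB →
          ∀ D : Set (Fin n → ℝ), MeasurableSet D →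
            ENNReal.ofReal β * Q₁ D ≤
              ∫⁻ r, ∫⁻ Δ, D.indicator (fun _ => (1 : ℝ≥0∞))
                  (projB rB (θ + α • Yf ξ θ r + α • Δ)) ∂pΔ ∂(q ξ.2.1 ξ.2.2.1 ξ.2.2.2) :=
  kernel_minorization_general π πb γf Φ q hq α hα rB hrB pΔ hpΔdens ψK hψle Yf hYf

end ETD19
end
end
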